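/- arXiv:2605.14613 — 4 statements merged into one kernel-verified Lean document; each statement's English description precedes it below -/
import Mathlib

section
/- For every k ≥ 2 and n ≥ 0, the set ℱ*_{n,k} of Munarini strings of length kn is the downward closure, with respect to the coordinatewise order on binary strings of length kn, of the set X = {Ψ̂(u) : u ∈ ℱ_{n,k} and u contains no letter 0}; that is, ℱ*_{n,k} = {v ∈ {0,1}^{kn} : v ≤ x for some x ∈ X}. Consequently Γ*_{n,k} is the daisy cube of Q_{kn} generated by X. -/
/-- The `k`-Fibonacci numbers: `F_{0,k} = 0`, `F_{1,k} = 1`,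
`F_{n,k} = k·F_{n-1,k} + F_{n-2,k}`. -/
def kFib (k : ℕ) : ℕ → ℕ
  | 0 => 0
  | 1 => 1
  | n + 2 => k * kFib k (n + 1) + kFib k n

/-- `k`-generalized Pell strings: strings over the alphabet `{0,…,k}` in which every
maximal run of the letter `k` has even length (equivalently, elements of the monoid
generated by `0,…,k-1` and `kk`). -/
inductive GenPell (k : ℕ) : List ℕ → Prop
  | nil : GenPell k []
  | cons (i : ℕ) (s : List ℕ) : i < k → GenPell k s → GenPell k (i :: s)
  | kk (s : List ℕ) : GenPell k s → GenPell k (k :: k :: s)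

/-- Vertices of the Munarini graph `M_{n,k}`: `k`-generalized Pell strings of length `n`. -/
abbrev PellVtx (n k : ℕ) := {s : List ℕ // s.length = n ∧ GenPell k s}

/-- Elementary Munarini move: replace one `0` by some `i ∈ {1,…,k-1}`, or replace a
substring `00` by `kk`. -/
def munariniRel (k : ℕ) (u v : List ℕ) : Prop :=
  (∃ a b : List ℕ, ∃ i : ℕ, 0 < i ∧ i < k ∧ u = a ++ 0 :: b ∧ v = a ++ i :: b) ∨
  (∃ a b : List ℕ, u = a ++ 0 :: 0 :: b ∧ v = a ++ k :: k :: b)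

/-- The Munarini graph `M_{n,k}`. -/
def MunariniGraph (n k : ℕ) : SimpleGraph (PellVtx n k) :=
  SimpleGraph.fromRel fun u v => munariniRel k u.val v.val

/-- Elementary move of the generalized Pell graph: replace one `i ∈ {0,…,k-2}` by `i+1`,
or replace a substring `(k-1)(k-1)` by `kk`. -/
def piRel (k : ℕ) (u v : List ℕ) : Prop :=
  (∃ a b : List ℕ, ∃ i : ℕ, i < k - 1 ∧ u = a ++ i :: b ∧ v = a ++ (i + 1) :: b) ∨
  (∃ a b : List ℕ, u = a ++ (k - 1) :: (k - 1) :: b ∧ v = a ++ k :: k :: b)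

/-- The generalized Pell graph `Π_{n,k}`. -/
def PiGraph (n k : ℕ) : SimpleGraph (PellVtx n k) :=
  SimpleGraph.fromRel fun u v => piRel k u.val v.val

/-- Two binary strings differ in exactly one coordinate (oriented version: `u` has a `false`
where `v` has a `true`, all other coordinates agree). -/
def diffOne (u v : List Bool) : Prop :=
  ∃ a b : List Bool, u = a ++ false :: b ∧ v = a ++ true :: b

/-- The hypercube `Q_m` on binary strings of length `m`; two strings are adjacent iff
they differ in exactly one coordinate. -/
def QCube (m : ℕ) : SimpleGraph {s : List Bool // s.length = m} :=
  SimpleGraph.fromRel fun u v => diffOne u.val v.val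

/-- A Fibonacci string: a binary string with no two consecutive `true`s. -/
def FibStr (s : List Bool) : Prop := List.Chain' (fun a b => ¬(a = true ∧ b = true)) s

/-- The Fibonacci cube `Γ_m`: the subgraph of `Q_m` induced by Fibonacci strings. -/
def FibCube (m : ℕ) : SimpleGraph {s : List Bool // s.length = m ∧ FibStr s} :=
  SimpleGraph.fromRel fun u v => diffOne u.val v.val

/-- The binary block `A_i` of length `k`: `A_0 = 0^k` and `A_i = 0^{i-1} 1 0^{k-i}`
for `1 ≤ i ≤ k`. -/
def blockA (k i : ℕ) : List Bool :=
  if i = 0 then List.replicate k false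
  else List.replicate (i - 1) false ++ true :: List.replicate (k - i) false

/-- Munarini strings: concatenations of blocks `A_0,…,A_k` in which every block `A_k`
is immediately followed by a block `A_0`. -/
inductive MunariniStr (k : ℕ) : List Bool → Prop
  | nil : MunariniStr k []
  | block (i : ℕ) (s : List Bool) : i < k → MunariniStr k s →
      MunariniStr k (blockA k i ++ s)
  | kblock (s : List Bool) : MunariniStr k s →
      MunariniStr k (blockA k k ++ (blockA k 0 ++ s))

/-- Vertices of `Γ*_{n,k}`: Munarini strings of length `k·n`. -/
abbrev MunStrVtx (n k : ℕ) := {s : List Bool // s.length = k * n ∧ MunariniStr k s}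

/-- `Γ*_{n,k}`: the subgraph of the hypercube `Q_{kn}` induced by Munarini strings. -/
def GammaStar (n k : ℕ) : SimpleGraph (MunStrVtx n k) :=
  SimpleGraph.fromRel fun u v => diffOne u.val v.val

/-- The map `Ψ̂`, replacing each letter `i ∈ {0,…,k-1}` by the block `A_i` and each
substring `kk` by `A_k A_0`. -/
def psi (k : ℕ) : List ℕ → List Bool
  | [] => []
  | [i] => blockA k i
  | i :: j :: s =>
      if i = k then blockA k k ++ (blockA k 0 ++ psi k s)
      else blockA k i ++ psi k (j :: s)

/-- Coordinatewise majority of three binary strings. -/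
def maj3 : List Bool → List Bool → List Bool → List Bool
  | a :: u, b :: v, c :: w => ((a && b) || (a && c) || (b && c)) :: maj3 u v w
  | _, _, _ => []

/-- The weight of a `(k+1)`-ary string: `w(u) = Σ_{i=1}^{k-1} |u|_i + |u|_k / 2`. -/
def pweight (k : ℕ) (u : List ℕ) : ℕ :=
  u.countP (fun a => decide (0 < a ∧ a < k)) + u.count k / 2

/-- Words over `{0,…,2k}` where every maximal run of `0`s and every maximal run of `1`s
has even length. -/
inductive EvenRuns01 (k : ℕ) : List ℕ → Prop
  | nil : EvenRuns01 k []
  | cons (i : ℕ) (s : List ℕ) : 2 ≤ i → i ≤ 2 * k → EvenRuns01 k s → EvenRuns01 k (i :: s)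
  | zz (s : List ℕ) : EvenRuns01 k s → EvenRuns01 k (0 :: 0 :: s)
  | oo (s : List ℕ) : EvenRuns01 k s → EvenRuns01 k (1 :: 1 :: s)

/-- The number of maximal induced hypercubes of dimension `p` in a graph `G`:
vertex subsets inducing a subgraph isomorphic to `Q_p` that are not properly contained
in any vertex subset inducing a hypercube. -/
noncomputable def maxCubeCount {V : Type} (G : SimpleGraph V) (p : ℕ) : ℕ :=
  {S : Set V | Nonempty (G.induce S ≃g QCube p) ∧
      ∀ T : Set V, S ⊆ T → (∃ q : ℕ, Nonempty (G.induce T ≃g QCube q)) → T = S}.ncard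


lemma blockA_length {k i : ℕ} (h1 : 1 ≤ i) (h2 : i ≤ k) : (blockA k i).length = k := by
  rw [blockA, if_neg (by omega : ¬ i = 0)]
  simp only [List.length_append, List.length_replicate, List.length_cons]
  omega

lemma blockA_zero_length (k : ℕ) : (blockA k 0).length = k := by simp [blockA]

lemma psi_cons (k i : ℕ) (s : List ℕ) (h : i ≠ k) :
    psi k (i :: s) = blockA k i ++ psi k s := by
  cases s with
  | nil => simp [psi]
  | cons j t => simp [psi, h]

lemma psi_kk (k : ℕ) (s : List ℕ) :
    psi k (k :: k :: s) = blockA k k ++ (blockA k 0 ++ psi k s) := by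
  simp [psi]

lemma le_replicate_false {w : List Bool} {m : ℕ}
    (h : List.Forall₂ (· ≤ ·) w (List.replicate m false)) :
    w = List.replicate m false := by
  induction m generalizing w with
  | zero => cases h; rfl
  | succ m ih =>
    rw [List.replicate_succ] at h ⊢
    cases h with
    | cons hb ht =>
      rename_i a u
      cases a
      · rw [ih ht]
      · exact absurd hb (by decide)

lemma replicate_false_le {x : List Bool} {m : ℕ} (h : x.length = m) :
    List.Forall₂ (· ≤ ·) (List.replicate m false) x := by
  induction x generalizing m with
  | nil => subst h; exact List.Forall₂.nil
  | cons a t ih =>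
    subst h
    rw [List.length_cons, List.replicate_succ]
    exact List.Forall₂.cons (Bool.false_le a) (ih rfl)

lemma forall₂_split {R : Bool → Bool → Prop} {v a b : List Bool}
    (h : List.Forall₂ R v (a ++ b)) :
    ∃ v1 v2, v = v1 ++ v2 ∧ List.Forall₂ R v1 a ∧ List.Forall₂ R v2 b := by
  refine ⟨v.take a.length, v.drop a.length, (List.take_append_drop _ v).symm,
    List.forall₂_take_append v a b h, List.forall₂_drop_append v a b h⟩

lemma le_blockA {w : List Bool} {k i : ℕ} (h1 : 1 ≤ i) (h2 : i ≤ k)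
    (h : List.Forall₂ (· ≤ ·) w (blockA k i)) :
    w = blockA k 0 ∨ w = blockA k i := by
  have hne : ¬ i = 0 := by omega
  rw [blockA, if_neg hne] at h
  obtain ⟨w1, w2, rfl, hw1, hw2⟩ := forall₂_split h
  cases hw2 with
  | cons hb ht =>
    rename_i a u
    have hw1' := le_replicate_false hw1
    have hu := le_replicate_false ht
    subst hw1' hu
    cases a with
    | false =>
      left
      rw [blockA, if_pos rfl]
      rw [show (false : Bool) :: List.replicate (k - i) false
          = List.replicate (k - i + 1) false from rfl,
        ← List.replicate_add]
      congr 1; omega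
    | true => right; rw [blockA, if_neg hne]

lemma forward_dir (k : ℕ) (hk : 2 ≤ k) :
    ∀ v : List Bool, MunariniStr k v →
      ∃ u : List ℕ, GenPell k u ∧ 0 ∉ u ∧ k * u.length = v.length ∧
        List.Forall₂ (· ≤ ·) v (psi k u) := by
  intro v hv
  induction hv with
  | nil => exact ⟨[], GenPell.nil, by simp, by simp, List.Forall₂.nil⟩
  | block i s hi hs ih =>
    obtain ⟨u, hu, h0, hl, hle⟩ := ih
    refine ⟨max i 1 :: u, GenPell.cons _ _ (by omega) hu, ?_, ?_, ?_⟩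
    · intro h
      rcases List.mem_cons.mp h with h | h
      · omega
      · exact h0 h
    · simp only [List.length_cons, List.length_append]
      rcases Nat.eq_zero_or_pos i with rfl | hpos
      · rw [blockA_zero_length, ← hl]; ring
      · rw [blockA_length hpos (by omega), ← hl]; ring
    · rw [psi_cons k _ _ (by omega)]
      refine List.rel_append ?_ hle
      rcases Nat.eq_zero_or_pos i with rfl | hpos
      · simp only [Nat.max_eq_right (by omega : (0:ℕ) ≤ 1)]
        rw [blockA]
        exact replicate_false_le (blockA_length (le_refl 1) (by omega))
      · rw [Nat.max_eq_left hpos]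
        exact List.forall₂_same.mpr (fun x _ => le_refl x)
  | kblock s hs ih =>
    obtain ⟨u, hu, h0, hl, hle⟩ := ih
    refine ⟨k :: k :: u, GenPell.kk _ hu, ?_, ?_, ?_⟩
    · intro h
      rcases List.mem_cons.mp h with h | h
      · omega
      · rcases List.mem_cons.mp h with h | h
        · omega
        · exact h0 h
    · simp only [List.length_cons, List.length_append]
      rw [blockA_length (by omega) (le_refl k), blockA_zero_length, ← hl]; ring
    · rw [psi_kk]
      refine List.rel_append (List.forall₂_same.mpr (fun x _ => le_refl x)) ?_
      exact List.rel_append (List.forall₂_same.mpr (fun x _ => le_refl x)) hle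

lemma backward_dir (k : ℕ) (hk : 2 ≤ k) :
    ∀ u : List ℕ, GenPell k u → 0 ∉ u →
      ∀ v : List Bool, List.Forall₂ (· ≤ ·) v (psi k u) →
        v.length = k * u.length ∧ MunariniStr k v := by
  intro u hu
  induction hu with
  | nil =>
    intro _ v hv
    cases hv
    exact ⟨by simp, MunariniStr.nil⟩
  | cons i s hi hs ih =>
    intro h0 v hv
    have hi1 : 1 ≤ i := by
      rcases Nat.eq_zero_or_pos i with rfl | h; · simp at h0
      · exact h
    rw [psi_cons k i s (by omega)] at hv
    obtain ⟨v1, v2, rfl, hv1, hv2⟩ := forall₂_split hv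
    obtain ⟨hl2, hm2⟩ := ih (fun h => h0 (List.mem_cons_of_mem _ h)) v2 hv2
    rcases le_blockA hi1 (by omega) hv1 with rfl | rfl
    · constructor
      · rw [List.length_append, blockA_zero_length, hl2, List.length_cons]; ring
      · exact MunariniStr.block 0 v2 (by omega) hm2
    · constructor
      · rw [List.length_append, blockA_length hi1 (by omega), hl2, List.length_cons]; ring
      · exact MunariniStr.block i v2 hi hm2
  | kk s hs ih =>
    intro h0 v hv
    rw [psi_kk] at hv
    obtain ⟨v1, w, rfl, hv1, hw⟩ := forall₂_split hv
    obtain ⟨v2, v3, rfl, hv2, hv3⟩ := forall₂_split hw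
    have hv2' : v2 = blockA k 0 := by
      rw [blockA, if_pos rfl] at hv2 ⊢; exact le_replicate_false hv2
    subst hv2'
    obtain ⟨hl3, hm3⟩ := ih (by intro h; exact h0 (by simp [h]))  v3 hv3
    have hlv1 : v1.length = k := by
      have := List.Forall₂.length_eq hv1
      rw [this, blockA_length (by omega) (le_refl k)]
    rcases le_blockA (by omega : 1 ≤ k) (le_refl k) hv1 with rfl | rfl
    · constructor
      · simp only [List.length_append, hlv1, blockA_zero_length, hl3, List.length_cons]; ring
      · exact MunariniStr.block 0 _ (by omega)
          (MunariniStr.block 0 _ (by omega) hm3)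
    · constructor
      · simp only [List.length_append, hlv1, blockA_zero_length, hl3, List.length_cons]; ring
      · exact MunariniStr.kblock _ hm3

/-- The set of Munarini strings of length `k·n` is the downward closure of
`X = {Ψ̂(u) : u ∈ ℱ_{n,k}, u has no letter 0}` with respect to the coordinatewise order;
hence `Γ*_{n,k}` is the daisy cube of `Q_{kn}` generated by `X`. -/
theorem munariniStr_downward_closure (k n : ℕ) (hk : 2 ≤ k) :
    {v : List Bool | v.length = k * n ∧ MunariniStr k v} =
      {v : List Bool | ∃ u : List ℕ, u.length = n ∧ GenPell k u ∧ 0 ∉ u ∧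
        List.Forall₂ (· ≤ ·) v (psi k u)} := by
  ext v
  simp only [Set.mem_setOf_eq]
  constructor
  · rintro ⟨hlen, hm⟩
    obtain ⟨u, hu, h0, hl, hle⟩ := forward_dir k hk v hm
    refine ⟨u, ?_, hu, h0, hle⟩
    exact Nat.eq_of_mul_eq_mul_left (by omega) (hl.trans hlen)
  · rintro ⟨u, hlen, hu, h0, hle⟩
    obtain ⟨h1, h2⟩ := backward_dir k hk u hu h0 v hle
    exact ⟨by rw [h1, hlen], h2⟩
end

section
/- For k ≥ 1 let a_k(n,d) denote the number of strings in ℱ_{n,k} of weight d. Then a_k(n,0) = 1 for all n ≥ 0, a_k(1,d) = k − 1 for d = 1 and a_k(1,d) = 0 for d ≥ 2, and for all n ≥ 2 and d ≥ 1, a_k(n,d) = a_k(n−1,d) + (k−1)·a_k(n−1,d−1) + a_k(n−2,d−1). -/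
/-- `a k n d`: the number of `k`-generalized Pell strings of length `n` and weight `d`. -/
noncomputable def countWeight (k n d : ℕ) : ℕ :=
  {u : List ℕ | u.length = n ∧ GenPell k u ∧ pweight k u = d}.ncard

namespace CWaux

lemma pweight_cons {k i : ℕ} (hik : i < k) (s : List ℕ) :
    pweight k (i :: s) = pweight k s + (if 0 < i then 1 else 0) := by
  simp only [pweight, List.countP_cons, List.count_cons]
  have h2 : ¬ (i = k) := hik.ne
  have h3 : (i == k) = false := by simpa using h2
  simp only [h3, if_false, add_zero, decide_eq_true_iff]
  split
  · rename_i h; simp [h.1, hik]; omega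
  · rename_i h
    have : ¬ (0 < i) := fun h0 => h ⟨h0, hik⟩
    simp [this]

lemma pweight_kk (k : ℕ) (s : List ℕ) :
    pweight k (k :: k :: s) = pweight k s + 1 := by
  simp only [pweight, List.countP_cons, List.count_cons]
  have : ¬ (0 < k ∧ k < k) := by omega
  simp [this]
  omega

lemma genPell_bound {k : ℕ} {u : List ℕ} (h : GenPell k u) : ∀ a ∈ u, a ≤ k := by
  induction h with
  | nil => simp
  | cons i s hi hs ih =>
    intro a ha
    rcases List.mem_cons.mp ha with rfl | ha
    · omega
    · exact ih a ha
  | kk s hs ih =>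
    intro a ha
    rcases List.mem_cons.mp ha with rfl | ha
    · exact le_refl _
    · rcases List.mem_cons.mp ha with rfl | ha
      · exact le_refl _
      · exact ih a ha

lemma finite_S (k n d : ℕ) :
    {u : List ℕ | u.length = n ∧ GenPell k u ∧ pweight k u = d}.Finite := by
  have h := Set.Finite.image (List.map (Fin.val (n := k+1)))
    (List.finite_length_eq (α := Fin (k+1)) (n := n))
  apply h.subset
  rintro u ⟨hl, hg, -⟩
  refine ⟨u.pmap (fun a ha => (⟨a, ha⟩ : Fin (k+1)))
      (fun a ha => Nat.lt_succ_of_le (genPell_bound hg a ha)), ?_, ?_⟩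
  · simpa using hl
  · rw [List.map_pmap]
    simp


lemma genPell_replicate (k n : ℕ) (hk : 0 < k) : GenPell k (List.replicate n 0) := by
  induction n with
  | zero => exact GenPell.nil
  | succ m ih => exact GenPell.cons 0 _ hk ih

lemma pweight_replicate (k n : ℕ) (hk : 0 < k) : pweight k (List.replicate n 0) = 0 := by
  induction n with
  | zero => simp [pweight]
  | succ m ih => rw [List.replicate_succ, pweight_cons hk]; simpa using ih

lemma eq_replicate_of_pweight_zero {k : ℕ} {u : List ℕ} (h : GenPell k u)
    (hw : pweight k u = 0) : u = List.replicate u.length 0 := by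
  induction h with
  | nil => simp
  | cons i s hi hs ih =>
    rw [pweight_cons hi] at hw
    have hi0 : i = 0 := by
      by_contra h0
      simp [Nat.pos_of_ne_zero h0] at hw
    have hs0 : pweight k s = 0 := by omega
    subst hi0
    rw [List.length_cons, List.replicate_succ, ih hs0]
    simp
  | kk s hs ih => rw [pweight_kk] at hw; omega

lemma countWeight_zero (k : ℕ) (hk : 1 ≤ k) (n : ℕ) : countWeight k n 0 = 1 := by
  have : {u : List ℕ | u.length = n ∧ GenPell k u ∧ pweight k u = 0}
      = {List.replicate n 0} := by
    ext u
    simp only [Set.mem_setOf_eq, Set.mem_singleton_iff]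
    constructor
    · rintro ⟨hl, hg, hw⟩
      rw [eq_replicate_of_pweight_zero hg hw, hl]
    · rintro rfl
      exact ⟨by simp, genPell_replicate k n hk, pweight_replicate k n hk⟩
  rw [countWeight, this, Set.ncard_singleton]

lemma countWeight_one_one (k : ℕ) (hk : 1 ≤ k) : countWeight k 1 1 = k - 1 := by
  have : {u : List ℕ | u.length = 1 ∧ GenPell k u ∧ pweight k u = 1}
      = (fun i => [i]) '' (Set.Ico 1 k) := by
    ext u
    simp only [Set.mem_setOf_eq, Set.mem_image, Set.mem_Ico]
    constructor
    · rintro ⟨hl, hg, hw⟩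
      rcases hg with _ | ⟨i, s, hi, hs⟩ | ⟨s, hs⟩
      · simp at hl
      · have : s = [] := by simpa using hl
        subst this
        rw [pweight_cons hi] at hw
        simp only [pweight, List.countP_nil, List.count_nil] at hw
        have hi0 : 0 < i := by by_contra h0; rw [if_neg h0] at hw; omega
        exact ⟨i, ⟨hi0, hi⟩, rfl⟩
      · simp at hl
    · rintro ⟨i, ⟨h1, h2⟩, rfl⟩
      refine ⟨rfl, GenPell.cons i [] h2 GenPell.nil, ?_⟩
      rw [pweight_cons h2]
      simp only [pweight, List.countP_nil, List.count_nil]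
      simp [Nat.lt_of_lt_of_le Nat.zero_lt_one h1]
  rw [countWeight, this, Set.ncard_image_of_injective _ (fun a b h => by simpa using h)]
  rw [← Finset.coe_Ico, Set.ncard_coe_finset, Nat.card_Ico]

lemma countWeight_one_big (k d : ℕ) (hd : 2 ≤ d) : countWeight k 1 d = 0 := by
  have : {u : List ℕ | u.length = 1 ∧ GenPell k u ∧ pweight k u = d} = ∅ := by
    ext u
    simp only [Set.mem_setOf_eq, Set.mem_empty_iff_false, iff_false]
    rintro ⟨hl, hg, hw⟩
    rcases hg with _ | ⟨i, s, hi, hs⟩ | ⟨s, hs⟩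
    · simp at hl
    · have : s = [] := by simpa using hl
      subst this
      rw [pweight_cons hi] at hw
      simp only [pweight, List.countP_nil, List.count_nil] at hw
      split at hw <;> omega
    · simp at hl
  rw [countWeight, this, Set.ncard_empty]

lemma ncard_prod' {α β : Type*} (s : Set α) (t : Set β) :
    (s ×ˢ t).ncard = s.ncard * t.ncard := by
  rw [← Nat.card_coe_set_eq, ← Nat.card_coe_set_eq, ← Nat.card_coe_set_eq,
    Nat.card_congr (Equiv.Set.prod s t), Nat.card_prod]


lemma decomposition (k : ℕ) (hk : 1 ≤ k) (m e : ℕ) :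
    {u : List ℕ | u.length = m + 2 ∧ GenPell k u ∧ pweight k u = e + 1} =
      ((fun s => 0 :: s) '' {u : List ℕ | u.length = m + 1 ∧ GenPell k u ∧ pweight k u = e + 1} ∪
       (fun p : ℕ × List ℕ => p.1 :: p.2) ''
         ((Set.Ico 1 k) ×ˢ {u : List ℕ | u.length = m + 1 ∧ GenPell k u ∧ pweight k u = e})) ∪
      (fun s => k :: k :: s) '' {u : List ℕ | u.length = m ∧ GenPell k u ∧ pweight k u = e} := by
  ext u
  simp only [Set.mem_setOf_eq, Set.mem_union, Set.mem_image, Set.mem_prod, Set.mem_Ico,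
    Prod.exists]
  constructor
  · rintro ⟨hl, hg, hw⟩
    rcases hg with _ | ⟨i, s, hi, hs⟩ | ⟨s, hs⟩
    · simp at hl
    · have hsl : s.length = m + 1 := by simpa using hl
      rw [pweight_cons hi] at hw
      rcases Nat.eq_zero_or_pos i with rfl | hipos
      · left; left
        refine ⟨s, ⟨hsl, hs, ?_⟩, rfl⟩
        simpa using hw
      · left; right
        refine ⟨i, s, ⟨⟨hipos, hi⟩, hsl, hs, ?_⟩, rfl⟩
        rw [if_pos hipos] at hw; omega
    · right
      have hsl : s.length = m := by simpa using hl
      rw [pweight_kk] at hw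
      exact ⟨s, ⟨hsl, hs, by omega⟩, rfl⟩
  · rintro ((⟨s, ⟨hsl, hs, hw⟩, rfl⟩ | ⟨i, s, ⟨⟨hi1, hi2⟩, hsl, hs, hw⟩, rfl⟩) |
      ⟨s, ⟨hsl, hs, hw⟩, rfl⟩)
    · exact ⟨by simp [hsl], GenPell.cons 0 s hk hs, by rw [pweight_cons hk]; simpa using hw⟩
    · refine ⟨by simp [hsl], GenPell.cons i s hi2 hs, ?_⟩
      rw [pweight_cons hi2, hw, if_pos (Nat.lt_of_lt_of_le Nat.zero_lt_one hi1)]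
    · exact ⟨by simp [hsl], GenPell.kk s hs, by rw [pweight_kk, hw]⟩

lemma countWeight_rec (k : ℕ) (hk : 1 ≤ k) (m e : ℕ) :
    countWeight k (m + 2) (e + 1) =
      countWeight k (m + 1) (e + 1) + (k - 1) * countWeight k (m + 1) e +
        countWeight k m e := by
  have finA := (finite_S k (m+1) (e+1)).image (fun s => 0 :: s)
  have finB := ((Set.finite_Ico 1 k).prod (finite_S k (m+1) e)).image
    (fun p : ℕ × List ℕ => p.1 :: p.2)
  have finC := (finite_S k m e).image (fun s => k :: k :: s)
  have dAB : Disjoint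
      ((fun s => 0 :: s) '' {u : List ℕ | u.length = m + 1 ∧ GenPell k u ∧ pweight k u = e + 1})
      ((fun p : ℕ × List ℕ => p.1 :: p.2) ''
        ((Set.Ico 1 k) ×ˢ {u : List ℕ | u.length = m + 1 ∧ GenPell k u ∧ pweight k u = e})) := by
    rw [Set.disjoint_left]
    rintro x ⟨s, -, rfl⟩ ⟨⟨i, t⟩, ⟨hi, -⟩, heq⟩
    simp only at heq
    injection heq with h1 h2
    simp only [Set.mem_Ico] at hi
    omega
  have dABC : Disjoint
      ((fun s => 0 :: s) '' {u : List ℕ | u.length = m + 1 ∧ GenPell k u ∧ pweight k u = e + 1} ∪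
       (fun p : ℕ × List ℕ => p.1 :: p.2) ''
         ((Set.Ico 1 k) ×ˢ {u : List ℕ | u.length = m + 1 ∧ GenPell k u ∧ pweight k u = e}))
      ((fun s => k :: k :: s) '' {u : List ℕ | u.length = m ∧ GenPell k u ∧ pweight k u = e}) := by
    rw [Set.disjoint_union_left]
    constructor
    · rw [Set.disjoint_left]
      rintro x ⟨s, -, rfl⟩ ⟨t, -, heq⟩
      injection heq with h1 h2
      omega
    · rw [Set.disjoint_left]
      rintro x ⟨⟨i, t⟩, ⟨hi, -⟩, rfl⟩ ⟨s, -, heq⟩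
      simp only at heq
      injection heq with h1 h2
      simp only [Set.mem_Ico] at hi
      omega
  rw [countWeight, decomposition k hk m e,
    Set.ncard_union_eq dABC (finA.union finB) finC,
    Set.ncard_union_eq dAB finA finB,
    Set.ncard_image_of_injective _ (List.cons_injective),
    Set.ncard_image_of_injective _ (fun (p q : ℕ × List ℕ) h => by
      obtain ⟨a, s⟩ := p; obtain ⟨b, t⟩ := q
      simp only at h
      injection h with h1 h2
      simp [h1, h2]),
    Set.ncard_image_of_injective _ (fun s t h => by injection h with h1 h2; injection h2),
    ncard_prod', ← Finset.coe_Ico, Set.ncard_coe_finset, Nat.card_Ico]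
  rfl

end CWaux

/-- initial values and recurrence for the weight counts. -/
theorem countWeight_recurrence (k : ℕ) (hk : 1 ≤ k) :
    (∀ n : ℕ, countWeight k n 0 = 1) ∧
    countWeight k 1 1 = k - 1 ∧
    (∀ d : ℕ, 2 ≤ d → countWeight k 1 d = 0) ∧
    (∀ n d : ℕ, 2 ≤ n → 1 ≤ d →
      countWeight k n d =
        countWeight k (n - 1) d + (k - 1) * countWeight k (n - 1) (d - 1) +
          countWeight k (n - 2) (d - 1)) := by
  refine ⟨CWaux.countWeight_zero k hk, CWaux.countWeight_one_one k hk,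
    fun d hd => CWaux.countWeight_one_big k d hd, fun n d hn hd => ?_⟩
  obtain ⟨m, rfl⟩ : ∃ m, n = m + 2 := ⟨n - 2, by omega⟩
  obtain ⟨e, rfl⟩ : ∃ e, d = e + 1 := ⟨d - 1, by omega⟩
  have h1 : m + 2 - 1 = m + 1 := by omega
  rw [h1, show m + 2 - 2 = m from rfl, show e + 1 - 1 = e from rfl]
  exact CWaux.countWeight_rec k hk m e
end

section
/- For every k ≥ 1 and 0 ≤ d ≤ n, the number of strings in ℱ_{n,k} of weight d equals Σ_{j=0}^{d} C(d,j)·C(n−j,d)·(k−1)^{d−j}. Equivalently, the number of vertices of the Munarini graph M_{n,k} at distance d from the all-zero string 0^n is Σ_{j=0}^{d} C(d,j)·C(n−j,d)·(k−1)^{d−j}. -/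
section AuxLemmas

lemma pweight_nil (k : ℕ) : pweight k [] = 0 := by simp [pweight]

lemma count_k_cons (k a : ℕ) (s : List ℕ) :
    (a :: s).count k = s.count k + if a = k then 1 else 0 := by
  rw [List.count_cons]
  simp [beq_iff_eq]

lemma countP_mid_cons (k a : ℕ) (s : List ℕ) :
    (a :: s).countP (fun a => decide (0 < a ∧ a < k)) =
      s.countP (fun a => decide (0 < a ∧ a < k)) + (if 0 < a ∧ a < k then 1 else 0) := by
  rw [List.countP_cons]
  by_cases h : 0 < a ∧ a < k <;> simp [h]

lemma pweight_cons_zero {k : ℕ} (hk : 1 ≤ k) (s : List ℕ) :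
    pweight k (0 :: s) = pweight k s := by
  unfold pweight
  rw [countP_mid_cons, count_k_cons]
  have : ¬ ((0:ℕ) = k) := by omega
  simp [this]

lemma pweight_cons_mid {k i : ℕ} (h0 : 0 < i) (hik : i < k) (s : List ℕ) :
    pweight k (i :: s) = pweight k s + 1 := by
  unfold pweight
  rw [countP_mid_cons, count_k_cons]
  have : ¬ (i = k) := by omega
  simp [this, h0, hik]
  omega

lemma pweight_kk {k : ℕ} (hk : 1 ≤ k) (s : List ℕ) :
    pweight k (k :: k :: s) = pweight k s + 1 := by
  unfold pweight
  rw [countP_mid_cons, countP_mid_cons, count_k_cons, count_k_cons]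
  have : ¬ (0 < k ∧ k < k) := by omega
  simp [this]
  omega

lemma pweight_cons_le (k a : ℕ) (s : List ℕ) : pweight k (a :: s) ≤ pweight k s + 1 := by
  unfold pweight
  rw [countP_mid_cons, count_k_cons]
  by_cases hak : a = k
  · have : ¬ (0 < a ∧ a < k) := by omega
    simp [this, hak]
    omega
  · simp [hak]
    by_cases h : 0 < a ∧ a < k <;> simp [h] <;> omega

lemma pweight_le_length (k : ℕ) (u : List ℕ) : pweight k u ≤ u.length := by
  induction u with
  | nil => simp [pweight_nil]
  | cons a s ih =>
    calc pweight k (a :: s) ≤ pweight k s + 1 := pweight_cons_le k a s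
    _ ≤ s.length + 1 := by omega
    _ = (a :: s).length := by simp

lemma GenPell.le {k : ℕ} {u : List ℕ} (h : GenPell k u) : ∀ x ∈ u, x ≤ k := by
  induction h with
  | nil => simp
  | cons i s hi hs ih =>
    intro x hx
    rcases List.mem_cons.1 hx with rfl | hx
    · omega
    · exact ih x hx
  | kk s hs ih =>
    intro x hx
    rcases List.mem_cons.1 hx with rfl | hx
    · exact le_refl _
    · rcases List.mem_cons.1 hx with rfl | hx
      · exact le_refl _
      · exact ih x hx

lemma GenPell.count_even {k : ℕ} {u : List ℕ} (h : GenPell k u) : Even (u.count k) := by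
  induction h with
  | nil => simp
  | cons i s hi hs ih =>
    rw [count_k_cons]
    have h' : ¬ (i = k) := by omega
    simpa [h'] using ih
  | kk s hs ih =>
    have h2 : (k :: k :: s).count k = s.count k + 2 := by
      rw [count_k_cons, count_k_cons]; simp
    rw [h2]
    rcases ih with ⟨m, hm⟩
    exact ⟨m + 1, by omega⟩

lemma GenPell.cons_inv {k x : ℕ} {s : List ℕ} (h : GenPell k (x :: s)) :
    (x < k ∧ GenPell k s) ∨ (x = k ∧ ∃ t, s = k :: t ∧ GenPell k t) := by
  cases h with
  | cons i s hi hs => exact Or.inl ⟨hi, hs⟩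
  | kk t ht => exact Or.inr ⟨rfl, t, rfl, ht⟩

lemma genPell_replicate {k : ℕ} (hk : 1 ≤ k) (n : ℕ) : GenPell k (List.replicate n 0) := by
  induction n with
  | zero => exact GenPell.nil
  | succ n ih => exact GenPell.cons 0 _ hk ih

lemma pweight_replicate {k : ℕ} (hk : 1 ≤ k) (n : ℕ) :
    pweight k (List.replicate n 0) = 0 := by
  induction n with
  | zero => simp [pweight]
  | succ n ih => rw [List.replicate_succ, pweight_cons_zero hk, ih]

end AuxLemmas

section SetLemmas

def PellSet (k n d : ℕ) : Set (List ℕ) :=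
  {u : List ℕ | u.length = n ∧ GenPell k u ∧ pweight k u = d}

lemma pellSet_finite (k n d : ℕ) : (PellSet k n d).Finite := by
  have hsub : PellSet k n d ⊆
      (fun l : List (Fin (k+1)) => l.map Fin.val) '' {l | l.length = n} := by
    rintro u ⟨hlen, hp, -⟩
    refine ⟨u.pmap (fun x hx => (⟨x, hx⟩ : Fin (k+1)))
      (fun x hx => Nat.lt_succ_of_le (hp.le x hx)), by simp [hlen], ?_⟩
    simp [List.map_pmap]
  exact Set.Finite.subset (Set.Finite.image _ (List.finite_length_eq _ n)) hsub

lemma ncard_prod' {α β : Type*} (s : Set α) (t : Set β) :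
    (s ×ˢ t).ncard = s.ncard * t.ncard := by
  rw [← Nat.card_coe_set_eq, ← Nat.card_coe_set_eq, ← Nat.card_coe_set_eq,
    ← Nat.card_prod]
  exact Nat.card_congr (Equiv.Set.prod s t)

lemma pellSet_empty {k n d : ℕ} (h : n < d) : PellSet k n d = ∅ := by
  ext u
  simp only [PellSet, Set.mem_setOf_eq, Set.mem_empty_iff_false, iff_false]
  rintro ⟨hlen, -, hw⟩
  have := pweight_le_length k u
  omega

lemma pellSet_weight_zero {k : ℕ} (hk : 1 ≤ k) (n : ℕ) :
    PellSet k n 0 = {List.replicate n 0} := by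
  ext u
  simp only [PellSet, Set.mem_setOf_eq, Set.mem_singleton_iff]
  constructor
  · rintro ⟨hlen, hp, hw⟩
    unfold pweight at hw
    have hcP : u.countP (fun a => decide (0 < a ∧ a < k)) = 0 := by omega
    have hck : u.count k = 0 := by
      rcases hp.count_even with ⟨m, hm⟩
      omega
    rw [List.eq_replicate_iff]
    refine ⟨hlen, fun b hb => ?_⟩
    have hble := hp.le b hb
    have hbk : b ≠ k := by
      intro hbk
      subst hbk
      have := List.count_pos_iff.2 hb
      omega
    have := List.countP_eq_zero.1 hcP b hb
    simp at this
    omega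
  · rintro rfl
    exact ⟨by simp, genPell_replicate hk n, pweight_replicate hk n⟩

lemma pellSet_decomp {k : ℕ} (hk : 1 ≤ k) (n d : ℕ) :
    PellSet k (n+2) (d+1) =
      (fun s => 0 :: s) '' PellSet k (n+1) (d+1) ∪
      (fun p : ℕ × List ℕ => p.1 :: p.2) '' (Set.Ioo 0 k ×ˢ PellSet k (n+1) d) ∪
      (fun s => k :: k :: s) '' PellSet k n d := by
  ext u
  constructor
  · rintro ⟨hlen, hp, hw⟩
    match u, hlen with
    | x :: s, hlen =>
      rcases hp.cons_inv with ⟨hxk, hps⟩ | ⟨rfl, t, rfl, hpt⟩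
      · rcases Nat.eq_zero_or_pos x with rfl | hx
        · exact Or.inl (Or.inl ⟨s, ⟨by simpa using hlen, hps,
            by rw [pweight_cons_zero hk] at hw; exact hw⟩, rfl⟩)
        · refine Or.inl (Or.inr ⟨(x, s), ⟨⟨hx, hxk⟩, by simpa using hlen, hps, ?_⟩, rfl⟩)
          rw [pweight_cons_mid hx hxk] at hw
          show pweight k s = d
          omega
      · refine Or.inr ⟨t, ⟨by simpa using hlen, hpt, ?_⟩, rfl⟩
        rw [pweight_kk hk] at hw
        omega
  · rintro ((⟨s, ⟨hlen, hp, hw⟩, rfl⟩ | ⟨⟨i, s⟩, ⟨⟨hi0, hik⟩, hlen, hp, hw⟩, rfl⟩) |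
      ⟨s, ⟨hlen, hp, hw⟩, rfl⟩)
    · exact ⟨by simp [hlen], GenPell.cons 0 s hk hp, by rw [pweight_cons_zero hk, hw]⟩
    · exact ⟨by simp [hlen], GenPell.cons i s hik hp, by rw [pweight_cons_mid hi0 hik, hw]⟩
    · exact ⟨by simp [hlen], GenPell.kk s hp, by rw [pweight_kk hk, hw]⟩

end SetLemmas

section Rec

lemma cons0_inj : Function.Injective (fun s : List ℕ => (0 : ℕ) :: s) :=
  fun a b h => by simpa using h

lemma consPair_inj : Function.Injective (fun p : ℕ × List ℕ => p.1 :: p.2) := by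
  rintro ⟨a, b⟩ ⟨c, d⟩ h
  simp only [List.cons.injEq] at h
  simp [Prod.ext_iff, h.1, h.2]

lemma conskk_inj (k : ℕ) : Function.Injective (fun s : List ℕ => k :: k :: s) :=
  fun a b h => by simpa using h

lemma pellSet_rec {k : ℕ} (hk : 1 ≤ k) (n d : ℕ) :
    (PellSet k (n+2) (d+1)).ncard =
      (PellSet k (n+1) (d+1)).ncard + (k-1) * (PellSet k (n+1) d).ncard
        + (PellSet k n d).ncard := by
  rw [pellSet_decomp hk n d]
  set A := (fun s => (0:ℕ) :: s) '' PellSet k (n+1) (d+1) with hA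
  set B := (fun p : ℕ × List ℕ => p.1 :: p.2) '' (Set.Ioo 0 k ×ˢ PellSet k (n+1) d) with hB
  set C := (fun s => k :: k :: s) '' PellSet k n d with hC
  have fin1 : A.Finite := (pellSet_finite k (n+1) (d+1)).image _
  have fin2 : B.Finite := ((Set.finite_Ioo 0 k).prod (pellSet_finite k (n+1) d)).image _
  have fin3 : C.Finite := (pellSet_finite k n d).image _
  have d12 : Disjoint A B := by
    rw [Set.disjoint_left]
    rintro x ⟨s, -, rfl⟩ ⟨⟨i, t⟩, ⟨⟨hi, -⟩, -⟩, heq⟩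
    simp only [List.cons.injEq] at heq
    omega
  have d13 : Disjoint A C := by
    rw [Set.disjoint_left]
    rintro x ⟨s, -, rfl⟩ ⟨t, -, heq⟩
    simp only [List.cons.injEq] at heq
    omega
  have d23 : Disjoint B C := by
    rw [Set.disjoint_left]
    rintro x ⟨⟨i, s⟩, ⟨⟨-, hik⟩, -⟩, rfl⟩ ⟨t, -, heq⟩
    simp only [List.cons.injEq] at heq
    omega
  rw [Set.ncard_union_eq (Set.disjoint_union_left.2 ⟨d13, d23⟩) (fin1.union fin2) fin3,
    Set.ncard_union_eq d12 fin1 fin2]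
  have hcA : A.ncard = (PellSet k (n+1) (d+1)).ncard :=
    Set.ncard_image_of_injective _ cons0_inj
  have hcB : B.ncard = (k-1) * (PellSet k (n+1) d).ncard := by
    rw [hB, Set.ncard_image_of_injective _ consPair_inj, ncard_prod', ← Finset.coe_Ioo,
      Set.ncard_coe_finset, Nat.card_Ioo]
    norm_num
  have hcC : C.ncard = (PellSet k n d).ncard :=
    Set.ncard_image_of_injective _ (conskk_inj k)
  omega

end Rec

section Formula

def Fform (k n d : ℕ) : ℕ :=
  ∑ j ∈ Finset.range (d + 1), d.choose j * (n - j).choose d * (k - 1) ^ (d - j)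

lemma Fform_zero (k n : ℕ) : Fform k n 0 = 1 := by simp [Fform]

lemma Fform_eq_zero {k n d : ℕ} (h : n < d) : Fform k n d = 0 := by
  apply Finset.sum_eq_zero
  intro j hj
  have : (n - j).choose d = 0 := Nat.choose_eq_zero_of_lt (by omega)
  simp [this]

lemma Fform_one_one (k : ℕ) : Fform k 1 1 = k - 1 := by
  simp [Fform, Finset.sum_range_succ]

lemma Fform_rec (k n d : ℕ) :
    Fform k (n+2) (d+1) = Fform k (n+1) (d+1) + (k-1) * Fform k (n+1) d + Fform k n d := by
  have step1 : Fform k (n+2) (d+1) = Fform k (n+1) (d+1) +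
      ∑ j ∈ Finset.range (d+2), (d+1).choose j * ((n+1)-j).choose d * (k-1)^((d+1)-j) := by
    rw [Fform, Fform, ← Finset.sum_add_distrib]
    apply Finset.sum_congr rfl
    intro j hj
    rcases le_or_gt j (n+1) with h | h
    · have h2 : n + 2 - j = (n + 1 - j) + 1 := by omega
      rw [h2, Nat.choose_succ_succ]
      ring
    · have h2 : n + 2 - j = 0 := by omega
      have h3 : n + 1 - j = 0 := by omega
      have hd : 1 ≤ d := by
        simp only [Finset.mem_range] at hj
        omega
      rw [h2, h3, Nat.choose_eq_zero_of_lt (by omega : (0:ℕ) < d+1),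
        Nat.choose_eq_zero_of_lt (by omega : (0:ℕ) < d)]
      ring
  have step2 : ∑ j ∈ Finset.range (d+2), (d+1).choose j * ((n+1)-j).choose d * (k-1)^((d+1)-j)
      = (k-1) * Fform k (n+1) d + Fform k n d := by
    rw [Finset.sum_range_succ']
    have e1 : ∀ i ∈ Finset.range (d+1),
        (d+1).choose (i+1) * ((n+1)-(i+1)).choose d * (k-1)^((d+1)-(i+1))
        = d.choose i * (n-i).choose d * (k-1)^(d-i)
          + d.choose (i+1) * (n-i).choose d * (k-1)^(d-i) := by
      intro i hi
      have h2 : n + 1 - (i+1) = n - i := by omega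
      have h3 : d + 1 - (i+1) = d - i := by omega
      rw [h2, h3, Nat.choose_succ_succ]
      ring
    rw [Finset.sum_congr rfl e1, Finset.sum_add_distrib]
    have hR : ∑ i ∈ Finset.range (d+1), d.choose (i+1) * (n-i).choose d * (k-1)^(d-i)
        = ∑ i ∈ Finset.range d, d.choose (i+1) * (n-i).choose d * (k-1)^(d-i) := by
      rw [Finset.sum_range_succ, Nat.choose_eq_zero_of_lt (Nat.lt_succ_self d)]
      simp
    have hF : (k-1) * Fform k (n+1) d
        = ∑ i ∈ Finset.range d,
            (k-1) * (d.choose (i+1) * ((n+1)-(i+1)).choose d * (k-1)^(d-(i+1)))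
          + (k-1) * (d.choose 0 * ((n+1)-0).choose d * (k-1)^(d-0)) := by
      rw [Fform, Finset.mul_sum, Finset.sum_range_succ']
    rw [hR, hF]
    have e3 : ∀ i ∈ Finset.range d,
        d.choose (i+1) * (n-i).choose d * (k-1)^(d-i)
        = (k-1) * (d.choose (i+1) * ((n+1)-(i+1)).choose d * (k-1)^(d-(i+1))) := by
      intro i hi
      simp only [Finset.mem_range] at hi
      have h2 : n + 1 - (i+1) = n - i := by omega
      have h4 : d - i = (d - (i+1)) + 1 := by omega
      rw [h2, h4, pow_succ]
      ring
    rw [Finset.sum_congr rfl e3]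
    have hcorner : (d+1).choose 0 * ((n+1)-0).choose d * (k-1)^((d+1)-0)
        = (k-1) * (d.choose 0 * ((n+1)-0).choose d * (k-1)^(d-0)) := by
      simp only [Nat.choose_zero_right, Nat.sub_zero, one_mul]
      rw [pow_succ]
      ring
    rw [hcorner, ← Fform]
    ring
  rw [step1, step2]
  ring

end Formula

section MainCount

lemma singleton_list_inj : Function.Injective (fun i : ℕ => [i]) :=
  fun a b h => by simpa using h

lemma pellSet_one_one {k : ℕ} (hk : 1 ≤ k) :
    PellSet k 1 1 = (fun i : ℕ => [i]) '' Set.Ioo 0 k := by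
  ext u
  constructor
  · rintro ⟨hlen, hp, hw⟩
    match u, hlen with
    | [x], _ =>
      rcases hp.cons_inv with ⟨hxk, -⟩ | ⟨rfl, t, ht, -⟩
      · refine ⟨x, ⟨?_, hxk⟩, rfl⟩
        by_contra h0
        have hx0 : x = 0 := by omega
        subst hx0
        rw [pweight_cons_zero hk, pweight_nil] at hw
        omega
      · cases ht
  · rintro ⟨i, ⟨hi0, hik⟩, rfl⟩
    exact ⟨rfl, GenPell.cons i [] hik GenPell.nil,
      by rw [pweight_cons_mid hi0 hik, pweight_nil]⟩

lemma pell_count {k : ℕ} (hk : 1 ≤ k) : ∀ n d : ℕ, (PellSet k n d).ncard = Fform k n d := by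
  intro n
  induction n using Nat.strong_induction_on with
  | _ n ih =>
    rcases n with _ | _ | n
    · intro d
      rcases d with _ | d
      · rw [pellSet_weight_zero hk, Fform_zero, Set.ncard_singleton]
      · rw [pellSet_empty (by omega), Fform_eq_zero (by omega), Set.ncard_empty]
    · intro d
      rcases d with _ | _ | d
      · rw [pellSet_weight_zero hk, Fform_zero, Set.ncard_singleton]
      · rw [pellSet_one_one hk, Fform_one_one,
          Set.ncard_image_of_injective _ singleton_list_inj, ← Finset.coe_Ioo,
          Set.ncard_coe_finset, Nat.card_Ioo]
        norm_num
      · rw [pellSet_empty (by omega), Fform_eq_zero (by omega), Set.ncard_empty]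
    · intro d
      rcases d with _ | d
      · rw [pellSet_weight_zero hk, Fform_zero, Set.ncard_singleton]
      · rw [pellSet_rec hk n d, Fform_rec, ih (n+1) (by omega) (d+1),
          ih (n+1) (by omega) d, ih n (by omega) d]

end MainCount

section Dist

lemma munariniRel_weight {k : ℕ} (hk : 1 ≤ k) {u v : List ℕ} (h : munariniRel k u v) :
    pweight k v = pweight k u + 1 := by
  rcases h with ⟨a, b, i, h0, hik, rfl, rfl⟩ | ⟨a, b, rfl, rfl⟩
  · unfold pweight
    rw [List.countP_append, List.countP_append, List.count_append, List.count_append,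
      countP_mid_cons, countP_mid_cons, count_k_cons, count_k_cons]
    have e1 : ¬ ((0:ℕ) < 0 ∧ (0:ℕ) < k) := by omega
    have e2 : (0:ℕ) ≠ k := by omega
    have e3 : 0 < i ∧ i < k := ⟨h0, hik⟩
    have e4 : i ≠ k := by omega
    simp only [if_pos e3, if_neg e1, if_neg e2, if_neg e4]
    omega
  · unfold pweight
    rw [List.countP_append, List.countP_append, List.count_append, List.count_append,
      countP_mid_cons, countP_mid_cons, countP_mid_cons, countP_mid_cons,
      count_k_cons, count_k_cons, count_k_cons, count_k_cons]
    have e1 : ¬ ((0:ℕ) < 0 ∧ (0:ℕ) < k) := by omega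
    have e2 : (0:ℕ) ≠ k := by omega
    have e3 : ¬ (0 < k ∧ k < k) := by omega
    simp only [if_pos rfl, if_neg e1, if_neg e2, if_neg e3, eq_self_iff_true, if_true]
    omega

lemma adj_weight {n k : ℕ} (hk : 1 ≤ k) {u v : PellVtx n k}
    (h : (MunariniGraph n k).Adj u v) :
    pweight k v.val = pweight k u.val + 1 ∨ pweight k u.val = pweight k v.val + 1 := by
  simp only [MunariniGraph, SimpleGraph.fromRel_adj] at h
  rcases h.2 with h2 | h2
  · exact Or.inl (munariniRel_weight hk h2)
  · exact Or.inr (munariniRel_weight hk h2)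

lemma weight_le_walk_length {n k : ℕ} (hk : 1 ≤ k) {u v : PellVtx n k}
    (p : (MunariniGraph n k).Walk u v) :
    pweight k v.val ≤ pweight k u.val + p.length ∧
      pweight k u.val ≤ pweight k v.val + p.length := by
  induction p with
  | nil => simp
  | cons h q ih =>
    have h1 := adj_weight hk h
    rw [SimpleGraph.Walk.length_cons]
    rcases h1 with h1 | h1 <;> omega

lemma munariniRel_cons (k x : ℕ) {u v : List ℕ} (h : munariniRel k u v) :
    munariniRel k (x :: u) (x :: v) := by
  rcases h with ⟨a, b, i, h0, hik, rfl, rfl⟩ | ⟨a, b, rfl, rfl⟩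
  · exact Or.inl ⟨x :: a, b, i, h0, hik, rfl, rfl⟩
  · exact Or.inr ⟨x :: a, b, rfl, rfl⟩

def consHom (k n x : ℕ) (hx : x < k) : MunariniGraph n k →g MunariniGraph (n+1) k where
  toFun := fun s => ⟨x :: s.val, by simp [s.prop.1], GenPell.cons x s.val hx s.prop.2⟩
  map_rel' := by
    intro u v h
    simp only [MunariniGraph, SimpleGraph.fromRel_adj] at h ⊢
    constructor
    · intro hc
      apply h.1
      apply Subtype.ext
      have := congrArg Subtype.val hc
      simpa using this
    · rcases h.2 with h2 | h2
      · exact Or.inl (munariniRel_cons k x h2)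
      · exact Or.inr (munariniRel_cons k x h2)

def kkHom (k n : ℕ) : MunariniGraph n k →g MunariniGraph (n+2) k where
  toFun := fun s => ⟨k :: k :: s.val, by simp [s.prop.1], GenPell.kk s.val s.prop.2⟩
  map_rel' := by
    intro u v h
    simp only [MunariniGraph, SimpleGraph.fromRel_adj] at h ⊢
    constructor
    · intro hc
      apply h.1
      apply Subtype.ext
      have := congrArg Subtype.val hc
      simpa using this
    · rcases h.2 with h2 | h2
      · exact Or.inl (munariniRel_cons k k (munariniRel_cons k k h2))
      · exact Or.inr (munariniRel_cons k k (munariniRel_cons k k h2))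

lemma exists_walk_weight {k : ℕ} (hk : 1 ≤ k) :
    ∀ n (u z : PellVtx n k), z.val = List.replicate n 0 →
      ∃ p : (MunariniGraph n k).Walk z u, p.length = pweight k u.val := by
  intro n
  induction n using Nat.strong_induction_on with
  | _ n ih =>
    intro u z hz
    rcases n with _ | m
    · have hu : u.val = [] := List.length_eq_zero_iff.1 u.prop.1
      have hzu : z = u := Subtype.ext (by rw [hz, hu]; simp)
      refine ⟨(SimpleGraph.Walk.nil : (MunariniGraph 0 k).Walk z z).copy rfl hzu, ?_⟩
      rw [SimpleGraph.Walk.length_copy, hu, pweight_nil]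
      rfl
    · rcases hlist : u.val with _ | ⟨x, s⟩
      · exfalso
        have := u.prop.1
        rw [hlist] at this
        simp at this
      · have hup := u.prop.2
        rw [hlist] at hup
        have hlen : s.length = m := by
          have := u.prop.1
          rw [hlist] at this
          simpa using this
        rcases hup.cons_inv with ⟨hxk, hps⟩ | ⟨hxval, t, hst, hpt⟩
        · set sp : PellVtx m k := ⟨s, hlen, hps⟩ with hsp
          set zp : PellVtx m k := ⟨List.replicate m 0, by simp, genPell_replicate hk m⟩ with hzp
          obtain ⟨q, hq⟩ := ih m (by omega) sp zp rfl
          set H := consHom k m x hxk with hH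
          have huEq : H sp = u := Subtype.ext (by rw [hlist]; rfl)
          rcases Nat.eq_zero_or_pos x with rfl | hx0
          · have hzEq : z = H zp := Subtype.ext (by rw [hz, List.replicate_succ]; rfl)
            refine ⟨((q.map H).copy hzEq.symm huEq), ?_⟩
            rw [SimpleGraph.Walk.length_copy, SimpleGraph.Walk.length_map, hq]
            show pweight k s = pweight k (0 :: s)
            rw [pweight_cons_zero hk]
          · have hadj : (MunariniGraph (m+1) k).Adj z (H zp) := by
              simp only [MunariniGraph, SimpleGraph.fromRel_adj]
              constructor
              · intro hc
                have hcv := congrArg Subtype.val hc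
                have h2 : (H zp).val = x :: List.replicate m 0 := rfl
                change z.val = x :: List.replicate m 0 at hcv
                rw [hz, List.replicate_succ] at hcv
                simp only [List.cons.injEq] at hcv
                omega
              · refine Or.inl (Or.inl ⟨[], List.replicate m 0, x, hx0, hxk, ?_, rfl⟩)
                rw [hz, List.replicate_succ]
                rfl
            refine ⟨(SimpleGraph.Walk.cons hadj (q.map H)).copy rfl huEq, ?_⟩
            rw [SimpleGraph.Walk.length_copy, SimpleGraph.Walk.length_cons,
              SimpleGraph.Walk.length_map, hq]
            show pweight k s + 1 = pweight k (x :: s)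
            rw [pweight_cons_mid hx0 hxk]
        · have hlist' : u.val = k :: k :: t := by rw [hlist, hxval, hst]
          rcases m with _ | l
          · exfalso
            rw [hst] at hlen
            simp at hlen
          · have hlt : t.length = l := by
              rw [hst] at hlen
              simpa using hlen
            set tp : PellVtx l k := ⟨t, hlt, hpt⟩ with htp
            set zp : PellVtx l k := ⟨List.replicate l 0, by simp, genPell_replicate hk l⟩ with hzp
            obtain ⟨q, hq⟩ := ih l (by omega) tp zp rfl
            set H := kkHom k l with hH
            have huEq : H tp = u := Subtype.ext (by rw [hlist']; rfl)
            have hadj : (MunariniGraph (l+2) k).Adj z (H zp) := by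
              simp only [MunariniGraph, SimpleGraph.fromRel_adj]
              constructor
              · intro hc
                have hcv := congrArg Subtype.val hc
                have h2 : (H zp).val = k :: k :: List.replicate l 0 := rfl
                change z.val = k :: k :: List.replicate l 0 at hcv
                rw [hz, List.replicate_succ, List.replicate_succ] at hcv
                simp only [List.cons.injEq] at hcv
                omega
              · refine Or.inl (Or.inr ⟨[], List.replicate l 0, ?_, rfl⟩)
                rw [hz, List.replicate_succ, List.replicate_succ]
                rfl
            refine ⟨(SimpleGraph.Walk.cons hadj (q.map H)).copy rfl huEq, ?_⟩
            rw [SimpleGraph.Walk.length_copy, SimpleGraph.Walk.length_cons,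
              SimpleGraph.Walk.length_map, hq]
            show pweight k t + 1 = pweight k (x :: s)
            rw [hxval, hst, pweight_kk hk]

lemma dist_eq_pweight {n k : ℕ} (hk : 1 ≤ k) (z u : PellVtx n k)
    (hz : z.val = List.replicate n 0) :
    (MunariniGraph n k).dist z u = pweight k u.val := by
  obtain ⟨p, hp⟩ := exists_walk_weight hk n u z hz
  refine le_antisymm (hp ▸ SimpleGraph.dist_le p) ?_
  obtain ⟨q, hq⟩ := SimpleGraph.Reachable.exists_walk_length_eq_dist ⟨p⟩
  have h1 := (weight_le_walk_length hk q).1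
  rw [hz, pweight_replicate hk] at h1
  omega

end Dist

/-- the number of strings in `ℱ_{n,k}` of weight `d`, equivalently the number
of vertices of `M_{n,k}` at distance `d` from `0^n`, equals
`Σ_{j=0}^{d} C(d,j)·C(n−j,d)·(k−1)^{d−j}`. -/
theorem munarini_weight_count (k n d : ℕ) (hk : 1 ≤ k) (hd : d ≤ n) :
    {u : List ℕ | u.length = n ∧ GenPell k u ∧ pweight k u = d}.ncard =
      (∑ j ∈ Finset.range (d + 1), d.choose j * (n - j).choose d * (k - 1) ^ (d - j)) ∧
    ∀ z : PellVtx n k, z.val = List.replicate n 0 →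
      {u : PellVtx n k | (MunariniGraph n k).dist z u = d}.ncard =
        ∑ j ∈ Finset.range (d + 1), d.choose j * (n - j).choose d * (k - 1) ^ (d - j) := by
  constructor
  · exact pell_count hk n d
  · intro z hz
    have hset : {u : PellVtx n k | (MunariniGraph n k).dist z u = d}
        = {u : PellVtx n k | pweight k u.val = d} := by
      ext u
      simp only [Set.mem_setOf_eq, dist_eq_pweight hk z u hz]
    rw [hset, ← Set.ncard_image_of_injective {u : PellVtx n k | pweight k u.val = d}
      Subtype.val_injective]
    have himg : Subtype.val '' {u : PellVtx n k | pweight k u.val = d} = PellSet k n d := by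
      ext l
      constructor
      · rintro ⟨⟨l, h1, h2⟩, hw, rfl⟩
        exact ⟨h1, h2, hw⟩
      · rintro ⟨h1, h2, hw⟩
        exact ⟨⟨l, h1, h2⟩, hw, rfl⟩
    rw [himg]
    exact pell_count hk n d
end

section
/- For every k ≥ 1 and n ≥ 0, the total number of vertex subsets of the Munarini graph M_{n,k} inducing a subgraph isomorphic to a hypercube Q_p for some p ≥ 0 equals the number of words of length n over the alphabet {0,1,…,2k} in which every maximal run of 0s has even length and every maximal run of 1s has even length. -/
/-- symmetric closure -/
def MRel (k : ℕ) (u v : List ℕ) : Prop := munariniRel k u v ∨ munariniRel k v u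

lemma MRel.symm {k : ℕ} {u v : List ℕ} (h : MRel k u v) : MRel k v u := h.elim .inr .inl

lemma mrel_cons {k x y : ℕ} {t t' : List ℕ} (h : MRel k (x :: t) (y :: t')) :
    (x = y ∧ MRel k t t') ∨
    (x = 0 ∧ 0 < y ∧ y < k ∧ t = t') ∨
    (y = 0 ∧ 0 < x ∧ x < k ∧ t = t') ∨
    (x = 0 ∧ y = k ∧ ∃ b, t = 0 :: b ∧ t' = k :: b) ∨
    (y = 0 ∧ x = k ∧ ∃ b, t' = 0 :: b ∧ t = k :: b) := by
  rcases h with h | h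
  · rcases h with ⟨a, b, i, hi0, hik, hu, hv⟩ | ⟨a, b, hu, hv⟩
    · cases a with
      | nil =>
        simp only [List.nil_append, List.cons.injEq] at hu hv
        exact Or.inr (Or.inl ⟨hu.1, by omega, by omega, hu.2.trans hv.2.symm⟩)
      | cons c a' =>
        simp only [List.cons_append, List.cons.injEq] at hu hv
        refine Or.inl ⟨by rw [hu.1, hv.1], Or.inl (Or.inl ⟨a', b, i, hi0, hik, hu.2, hv.2⟩)⟩
    · cases a with
      | nil =>
        simp only [List.nil_append, List.cons.injEq] at hu hv
        exact Or.inr (Or.inr (Or.inr (Or.inl ⟨hu.1, hv.1, b, hu.2, hv.2⟩)))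
      | cons c a' =>
        simp only [List.cons_append, List.cons.injEq] at hu hv
        exact Or.inl ⟨by rw [hu.1, hv.1], Or.inl (Or.inr ⟨a', b, hu.2, hv.2⟩)⟩
  · rcases h with ⟨a, b, i, hi0, hik, hu, hv⟩ | ⟨a, b, hu, hv⟩
    · cases a with
      | nil =>
        simp only [List.nil_append, List.cons.injEq] at hu hv
        exact Or.inr (Or.inr (Or.inl ⟨hu.1, by omega, by omega, hv.2.trans hu.2.symm⟩))
      | cons c a' =>
        simp only [List.cons_append, List.cons.injEq] at hu hv
        exact Or.inl ⟨by rw [hu.1, hv.1], Or.inr (Or.inl ⟨a', b, i, hi0, hik, hu.2, hv.2⟩)⟩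
    · cases a with
      | nil =>
        simp only [List.nil_append, List.cons.injEq] at hu hv
        exact Or.inr (Or.inr (Or.inr (Or.inr ⟨hu.1, hv.1, b, hu.2, hv.2⟩)))
      | cons c a' =>
        simp only [List.cons_append, List.cons.injEq] at hu hv
        exact Or.inl ⟨by rw [hu.1, hv.1], Or.inr (Or.inr ⟨a', b, hu.2, hv.2⟩)⟩

lemma mrel_lift {k x : ℕ} {t t' : List ℕ} (h : MRel k t t') : MRel k (x :: t) (x :: t') := by
  rcases h with h | h
  · left
    rcases h with ⟨a, b, i, h1, h2, h3, h4⟩ | ⟨a, b, h3, h4⟩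
    · exact Or.inl ⟨x :: a, b, i, h1, h2, by simp [h3], by simp [h4]⟩
    · exact Or.inr ⟨x :: a, b, by simp [h3], by simp [h4]⟩
  · right
    rcases h with ⟨a, b, i, h1, h2, h3, h4⟩ | ⟨a, b, h3, h4⟩
    · exact Or.inl ⟨x :: a, b, i, h1, h2, by simp [h3], by simp [h4]⟩
    · exact Or.inr ⟨x :: a, b, by simp [h3], by simp [h4]⟩

lemma mrel_cross {k j : ℕ} (h0 : 0 < j) (hk : j < k) (t : List ℕ) :
    MRel k (0 :: t) (j :: t) :=
  Or.inl (Or.inl ⟨[], t, j, h0, hk, rfl, rfl⟩)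

lemma mrel_crosskk {k : ℕ} (t : List ℕ) : MRel k (0 :: 0 :: t) (k :: k :: t) :=
  Or.inl (Or.inr ⟨[], t, rfl, rfl⟩)

/-- same head: MRel of conses iff MRel of tails -/
lemma mrel_cons_same {k c : ℕ} (hk : 1 ≤ k) {t t' : List ℕ} :
    MRel k (c :: t) (c :: t') ↔ MRel k t t' := by
  constructor
  · intro h
    rcases mrel_cons h with ⟨_, h⟩ | ⟨h1, h2, _⟩ | ⟨h1, h2, _⟩ | ⟨h1, h2, _⟩ | ⟨h1, h2, _⟩ <;>
      first | exact h | omega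
  · exact mrel_lift

lemma mrel_length {k : ℕ} {u v : List ℕ} (h : MRel k u v) : u.length = v.length := by
  rcases h with (⟨a,b,i,_,_,h3,h4⟩ | ⟨a,b,h3,h4⟩) | (⟨a,b,i,_,_,h3,h4⟩ | ⟨a,b,h3,h4⟩) <;>
    subst h3 <;> subst h4 <;> simp

-- GenPell facts
lemma genPell_cons_inv {k i : ℕ} {s : List ℕ} (h : GenPell k (i :: s)) :
    (i < k ∧ GenPell k s) ∨ (i = k ∧ ∃ b, s = k :: b ∧ GenPell k b) := by
  cases h with
  | cons _ _ hik hs => exact Or.inl ⟨hik, hs⟩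
  | kk b hb => exact Or.inr ⟨rfl, b, rfl, hb⟩

lemma genPell_cons_lt {k i : ℕ} {s : List ℕ} (h : GenPell k (i :: s)) (hik : i < k) :
    GenPell k s := by
  rcases genPell_cons_inv h with ⟨_, h⟩ | ⟨h1, _⟩
  · exact h
  · omega

lemma genPell_k_head {k : ℕ} {s : List ℕ} (h : GenPell k (k :: s)) (hk : 1 ≤ k) :
    ∃ b, s = k :: b ∧ GenPell k b := by
  rcases genPell_cons_inv h with ⟨h1, _⟩ | ⟨_, h⟩
  · omega
  · exact h

lemma genPell_le {k : ℕ} {s : List ℕ} (h : GenPell k s) : ∀ a ∈ s, a ≤ k := by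
  induction h with
  | nil => simp
  | cons i s hik hs ih =>
      intro a ha
      rw [List.mem_cons] at ha
      rcases ha with rfl | ha
      · omega
      · exact ih _ ha
  | kk s hs ih =>
      intro a ha
      rw [List.mem_cons, List.mem_cons] at ha
      rcases ha with rfl | rfl | ha
      · omega
      · omega
      · exact ih _ ha

lemma madj_iff {n k : ℕ} {u v : PellVtx n k} :
    (MunariniGraph n k).Adj u v ↔ u ≠ v ∧ MRel k u.val v.val := by
  rw [MunariniGraph, SimpleGraph.fromRel_adj]; rfl

/-- function model of the hypercube -/
def QF (p : ℕ) : SimpleGraph (Fin p → Bool) :=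
  SimpleGraph.fromRel fun x y => ∃ i, y = Function.update x i (!x i)

lemma update_flip_ne {p : ℕ} (x : Fin p → Bool) (i : Fin p) :
    Function.update x i (!x i) ≠ x := by
  intro h
  have := congrFun h i
  simp at this

lemma QF_adj {p : ℕ} {x y : Fin p → Bool} :
    (QF p).Adj x y ↔ ∃ i, y = Function.update x i (!x i) := by
  rw [QF, SimpleGraph.fromRel_adj]
  constructor
  · rintro ⟨hne, h | ⟨i, h⟩⟩
    · exact h
    · refine ⟨i, ?_⟩
      subst h
      rw [Function.eq_update_iff]
      constructor
      · simp [Function.update_self]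
      · intro j hj; simp [Function.update_of_ne hj]
  · rintro ⟨i, h⟩
    exact ⟨by rw [h]; exact (update_flip_ne x i).symm, Or.inl ⟨i, h⟩⟩

lemma update_flip_inj {p : ℕ} {x : Fin p → Bool} {i j : Fin p}
    (h : Function.update x i (!x i) = Function.update x j (!x j)) : i = j := by
  by_contra hij
  have := congrFun h i
  rw [Function.update_self, Function.update_of_ne hij] at this
  simp at this

lemma update_flip_invol {p : ℕ} (x : Fin p → Bool) (i : Fin p) :
    Function.update (Function.update x i (!x i)) i (!(Function.update x i (!x i)) i) = x := by
  funext j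
  by_cases hj : j = i
  · subst hj; simp
  · simp [Function.update_of_ne hj]

lemma update_flip_comm {p : ℕ} (x : Fin p → Bool) {i j : Fin p} (hij : i ≠ j) :
    Function.update (Function.update x i (!x i)) j (!(Function.update x i (!x i)) j)
      = Function.update (Function.update x j (!x j)) i (!(Function.update x j (!x j)) i) := by
  funext c
  by_cases hci : c = i <;> by_cases hcj : c = j <;>
    subst_eqs <;>
    simp_all [Function.update_of_ne, Function.update_self, Function.update_apply]

/-- `QF` is preconnected. -/
lemma QF_preconnected (p : ℕ) : (QF p).Preconnected := by
  intro x y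
  generalize hn : (Finset.univ.filter fun i => x i ≠ y i).card = n
  induction n generalizing x with
  | zero =>
    have : x = y := by
      funext i
      by_contra hi
      have : i ∈ Finset.univ.filter fun i => x i ≠ y i := by simp [hi]
      rw [Finset.card_eq_zero] at hn
      simp [hn] at this
    rw [this]
  | succ m ih =>
    have hne : (Finset.univ.filter fun i => x i ≠ y i).Nonempty := by
      rw [← Finset.card_pos, hn]; omega
    obtain ⟨i, hi⟩ := hne
    simp only [Finset.mem_filter, Finset.mem_univ, true_and] at hi
    set x' := Function.update x i (y i) with hx'
    have hadj : (QF p).Adj x x' := by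
      rw [QF_adj]
      exact ⟨i, by rw [hx']; congr 1; cases hb : x i <;> cases hb' : y i <;> simp_all⟩
    have hcard : (Finset.univ.filter fun j => x' j ≠ y j).card = m := by
      have : (Finset.univ.filter fun j => x' j ≠ y j)
          = (Finset.univ.filter fun j => x j ≠ y j).erase i := by
        ext j
        simp only [Finset.mem_filter, Finset.mem_univ, true_and, Finset.mem_erase]
        by_cases hji : j = i
        · subst hji; simp [hx', Function.update_self]
        · simp [hx', Function.update_of_ne hji, hji]
      rw [this, Finset.card_erase_of_mem (by simp [hi]), hn]
      omega
    exact (hadj.reachable).trans (ih x' hcard)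

lemma diffOne_or_iff_flip {u v : List Bool} :
    (diffOne u v ∨ diffOne v u) ↔ ∃ a c b, u = a ++ c :: b ∧ v = a ++ (!c) :: b := by
  constructor
  · rintro (⟨a, b, hu, hv⟩ | ⟨a, b, hv, hu⟩)
    · exact ⟨a, false, b, hu, hv⟩
    · exact ⟨a, true, b, hu, hv⟩
  · rintro ⟨a, c, b, hu, hv⟩
    cases c
    · exact Or.inl ⟨a, b, hu, hv⟩
    · exact Or.inr ⟨a, b, hv, hu⟩

lemma flip_iff_getD {u v : List Bool} :
    (∃ a c b, u = a ++ c :: b ∧ v = a ++ (!c) :: b) ↔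
    (u.length = v.length ∧ ∃ i, i < u.length ∧ v.getD i false = !(u.getD i false) ∧
      ∀ j, j ≠ i → v.getD j false = u.getD j false) := by
  constructor
  · rintro ⟨a, c, b, rfl, rfl⟩
    refine ⟨by simp, a.length, by simp, ?_, ?_⟩
    · rw [List.getD_append_right _ _ _ _ (le_refl _), List.getD_append_right _ _ _ _ (le_refl _)]
      simp
    · intro j hj
      rcases Nat.lt_or_ge j a.length with h | h
      · rw [List.getD_append _ _ _ _ h, List.getD_append _ _ _ _ h]
      · have h' : a.length < j := by omega
        rw [List.getD_append_right _ _ _ _ (by omega), List.getD_append_right _ _ _ _ (by omega)]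
        obtain ⟨m, hm⟩ : ∃ m, j - a.length = m + 1 := ⟨j - a.length - 1, by omega⟩
        rw [hm]
        simp
  · rintro ⟨hlen, i, hi, hvi, hj⟩
    have hiv : i < v.length := hlen ▸ hi
    refine ⟨u.take i, u.getD i false, u.drop (i + 1), ?_, ?_⟩
    · conv_lhs => rw [← List.take_append_drop i u]
      rw [List.drop_eq_getElem_cons hi, List.getD_eq_getElem _ _ hi]
    · conv_lhs => rw [← List.take_append_drop i v]
      rw [List.drop_eq_getElem_cons hiv]
      congr 1
      · apply List.ext_getElem
        · simp [hlen]
        · intro j h1 h2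
          simp only [List.length_take] at h1 h2
          have hji : j < i := by omega
          rw [List.getElem_take, List.getElem_take]
          have := hj j (by omega)
          rwa [List.getD_eq_getElem _ _ (by omega), List.getD_eq_getElem _ _ (by omega)] at this
      · congr 1
        · rw [← List.getD_eq_getElem _ _ hiv, hvi]
        · apply List.ext_getElem
          · simp [hlen]
          · intro j h1 h2
            simp only [List.length_drop] at h1 h2
            rw [List.getElem_drop, List.getElem_drop]
            have := hj (i + 1 + j) (by omega)
            rwa [List.getD_eq_getElem _ _ (by omega), List.getD_eq_getElem _ _ (by omega)] at this

def listFunEquiv (p : ℕ) : {s : List Bool // s.length = p} ≃ (Fin p → Bool) where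
  toFun s i := s.val.getD i false
  invFun f := ⟨List.ofFn f, List.length_ofFn⟩
  left_inv s := by
    apply Subtype.ext
    apply List.ext_getElem
    · simp [s.2]
    · intro j h1 h2
      simp only [List.getElem_ofFn]
      rw [List.getD_eq_getElem _ _ h2]
  right_inv f := by
    funext i
    show (List.ofFn f).getD i false = f i
    rw [List.getD_eq_getElem _ _ (by simp [i.2]), List.getElem_ofFn]

lemma qcube_iso_qf (p : ℕ) : Nonempty (QCube p ≃g QF p) := by
  refine ⟨⟨listFunEquiv p, ?_⟩⟩
  intro u v
  rw [QF_adj, QCube, SimpleGraph.fromRel_adj]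
  constructor
  · rintro ⟨i, hupd⟩
    have h1 : (listFunEquiv p v) i = !((listFunEquiv p u) i) := by
      rw [hupd, Function.update_self]
    have h2 : ∀ j, j ≠ i → (listFunEquiv p v) j = (listFunEquiv p u) j := by
      intro j hj; rw [hupd, Function.update_of_ne hj]
    have key : ∃ a c b, u.val = a ++ c :: b ∧ v.val = a ++ (!c) :: b := by
      rw [flip_iff_getD]
      refine ⟨by rw [u.2, v.2], i, by rw [u.2]; exact i.2, h1, ?_⟩
      intro j hj
      rcases Nat.lt_or_ge j p with h | h
      · exact h2 ⟨j, h⟩ (by simpa [Fin.ext_iff] using hj)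
      · rw [List.getD_eq_default _ _ (by rw [v.2]; exact h),
          List.getD_eq_default _ _ (by rw [u.2]; exact h)]
    refine ⟨?_, (diffOne_or_iff_flip.mpr key)⟩
    rintro rfl
    simp at h1
  · rintro ⟨hne, hd⟩
    obtain ⟨hlen, j, hj, hvj, hjj⟩ := flip_iff_getD.mp (diffOne_or_iff_flip.mp hd)
    have hjp : j < p := u.2 ▸ hj
    refine ⟨⟨j, hjp⟩, ?_⟩
    rw [Function.eq_update_iff]
    exact ⟨hvj, fun x hx => hjj x (by simpa [Fin.ext_iff] using hx)⟩

lemma update_cons_succ {q : ℕ} (b : Bool) (y : Fin q → Bool) (j : Fin q) (v : Bool) :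
    Function.update (Fin.cons b y : Fin (q+1) → Bool) j.succ v
      = Fin.cons b (Function.update y j v) := by
  funext c
  refine Fin.cases ?_ ?_ c
  · rw [Function.update_of_ne (Fin.succ_ne_zero j).symm, Fin.cons_zero, Fin.cons_zero]
  · intro m
    by_cases hm : m = j
    · subst hm
      rw [Function.update_self, Fin.cons_succ, Function.update_self]
    · rw [Function.update_of_ne (by simpa [Fin.succ_inj] using hm), Fin.cons_succ, Fin.cons_succ,
        Function.update_of_ne hm]

lemma qf_cons_adj {q : ℕ} {b b' : Bool} {y y' : Fin q → Bool} :
    (QF (q+1)).Adj (Fin.cons b y) (Fin.cons b' y')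
      ↔ (b = b' ∧ (QF q).Adj y y') ∨ (b ≠ b' ∧ y = y') := by
  rw [QF_adj]
  constructor
  · rintro ⟨i, h⟩
    refine Fin.cases ?_ ?_ i h <;> clear h i
    · intro h
      rw [Fin.update_cons_zero, Fin.cons_zero] at h
      rw [Fin.cons_inj] at h
      exact Or.inr ⟨by rw [h.1]; cases b <;> simp, h.2.symm⟩
    · intro j h
      rw [Fin.cons_succ, update_cons_succ, Fin.cons_inj] at h
      refine Or.inl ⟨h.1.symm, ?_⟩
      rw [QF_adj]
      exact ⟨j, h.2⟩
  · rintro (⟨rfl, hadj⟩ | ⟨hne, rfl⟩)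
    · obtain ⟨j, hj⟩ := QF_adj.mp hadj
      exact ⟨j.succ, by rw [Fin.cons_succ, update_cons_succ, hj]⟩
    · refine ⟨0, ?_⟩
      rw [Fin.update_cons_zero, Fin.cons_zero]
      rw [Fin.cons_inj]
      exact ⟨by cases b <;> cases b' <;> simp_all, rfl⟩

/-- the subgraph of `QF (p+1)` on one side of coordinate `d` is a `QF p`. -/
noncomputable def sideIso (p : ℕ) (d : Fin (p+1)) (c0 : Bool) :
    ((QF (p+1)).induce {x | x d = c0}) ≃g QF p where
  toEquiv :=
  { toFun := fun x => (x.val ∘ d.succAbove : Fin p → Bool)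
    invFun := fun y => ⟨d.insertNth c0 y, by simp [Fin.insertNth_apply_same]⟩
    left_inv := by
      rintro ⟨x, hx⟩
      apply Subtype.ext
      simp only []
      funext j
      refine Fin.succAboveCases d ?_ ?_ j
      · rw [Fin.insertNth_apply_same]; exact hx.symm
      · intro m
        rw [Fin.insertNth_apply_succAbove]
        rfl
    right_inv := by
      intro y
      funext j
      simp only [Function.comp_apply]
      rw [Fin.insertNth_apply_succAbove] }
  map_rel_iff' := by
    rintro ⟨x, hx⟩ ⟨x', hx'⟩
    simp only [Equiv.coe_fn_mk, SimpleGraph.comap_adj, Function.Embedding.coe_subtype]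
    rw [QF_adj, QF_adj]
    constructor
    · rintro ⟨i, h⟩
      refine ⟨d.succAbove i, ?_⟩
      funext j
      refine Fin.succAboveCases d ?_ ?_ j
      · rw [Function.update_of_ne (Fin.succAbove_ne d i).symm, hx, hx']
      · intro m
        have := congrFun h m
        simp only [Function.comp_apply] at this
        by_cases hm : m = i
        · subst hm
          rw [Function.update_self] at this ⊢
          exact this
        · rw [Function.update_of_ne hm] at this
          rw [Function.update_of_ne (fun hc => hm (Fin.succAbove_right_injective hc))]
          exact this
    · rintro ⟨i, h⟩
      have hid : i ≠ d := by
        intro hc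
        have := congrFun h i
        rw [Function.update_self] at this
        rw [hc] at this
        rw [hx, hx'] at this
        simp at this
      obtain ⟨i0, hi0⟩ := Fin.exists_succAbove_eq hid
      refine ⟨i0, ?_⟩
      funext m
      have := congrFun h (d.succAbove m)
      simp only [Function.comp_apply]
      by_cases hm : m = i0
      · subst hm
        rw [hi0, Function.update_self] at this
        rw [Function.update_self, hi0]
        exact this
      · rw [Function.update_of_ne (by rw [← hi0]; exact fun hc => hm (Fin.succAbove_right_injective hc))] at this
        rw [Function.update_of_ne hm]
        exact this

lemma ind_adj {V : Type} {G : SimpleGraph V} {S : Set V} {a b : ↥S} :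
    (G.induce S).Adj a b ↔ G.Adj a.1 b.1 := Iff.rfl

/-- abstract description of a "cross pair" of prefixes -/
structure CrossSpec (k : ℕ) : Type 1 where
  δ : ℕ
  α : List ℕ → List ℕ
  β : List ℕ → List ℕ
  Oth : List ℕ → List ℕ → Prop
  len_α : ∀ t, (α t).length = t.length + δ
  len_β : ∀ t, (β t).length = t.length + δ
  gp_α : ∀ {t}, GenPell k t → GenPell k (α t)
  gp_α' : ∀ {t}, GenPell k (α t) → GenPell k t
  gp_β : ∀ {t}, GenPell k t → GenPell k (β t)
  inj_α : ∀ {t t'}, α t = α t' → t = t'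
  inj_β : ∀ {t t'}, β t = β t' → t = t'
  αβ_ne : ∀ {t t'}, α t ≠ β t'
  cross : ∀ t, MRel k (α t) (β t)
  tail_α : ∀ {t t'}, MRel k t t' → MRel k (α t) (α t')
  tail_β : ∀ {t t'}, MRel k t t' → MRel k (β t) (β t')
  nbr_β : ∀ {u t}, GenPell k u → MRel k u (β t) → (∃ s, u = β s ∧ MRel k s t) ∨ u = α t
  nbr_α : ∀ {u t}, GenPell k u → MRel k u (α t) →
      (∃ s, u = α s ∧ MRel k s t) ∨ u = β t ∨ Oth u t
  oth_not : ∀ {u t s}, Oth u t → ¬ MRel k u (β s)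
  oth_ne_α : ∀ {u t s}, Oth u t → u ≠ α s

namespace CrossSpec

variable {k : ℕ} (CS : CrossSpec k)

lemma tail_α_iff {t t' : List ℕ} (h : GenPell k t) (h' : GenPell k t') :
    MRel k (CS.α t) (CS.α t') ↔ MRel k t t' := by
  constructor
  · intro hr
    rcases CS.nbr_α (CS.gp_α h') hr.symm with ⟨s, hs, hst⟩ | h2 | h3
    · exact (MRel.symm (CS.inj_α hs ▸ hst))
    · exact absurd h2 CS.αβ_ne
    · exact absurd rfl (CS.oth_ne_α h3)
  · exact CS.tail_α

lemma tail_β_iff {t t' : List ℕ} (h : GenPell k t) (h' : GenPell k t') :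
    MRel k (CS.β t) (CS.β t') ↔ MRel k t t' := by
  constructor
  · intro hr
    rcases CS.nbr_β (CS.gp_β h') hr.symm with ⟨s, hs, hst⟩ | h2
    · exact (MRel.symm (CS.inj_β hs ▸ hst))
    · exact absurd h2.symm CS.αβ_ne
  · exact CS.tail_β

lemma cross_iff {t t' : List ℕ} (h : GenPell k t) :
    MRel k (CS.α t) (CS.β t') ↔ t = t' := by
  constructor
  · intro hr
    rcases CS.nbr_β (CS.gp_α h) hr with ⟨s, hs, _⟩ | h2
    · exact absurd hs CS.αβ_ne
    · exact CS.inj_α h2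
  · rintro rfl; exact CS.cross t

end CrossSpec

def OtherJ (k j : ℕ) (u t : List ℕ) : Prop :=
  (∃ j', j' ≠ j ∧ 0 < j' ∧ j' < k ∧ u = j' :: t) ∨ (∃ b, t = 0 :: b ∧ u = k :: k :: b)

def OtherKK (k : ℕ) (u t : List ℕ) : Prop :=
  (∃ j', 0 < j' ∧ j' < k ∧ u = j' :: 0 :: t) ∨
  (∃ x', 0 < x' ∧ x' < k ∧ u = 0 :: x' :: t) ∨
  (∃ b, t = 0 :: b ∧ u = 0 :: k :: k :: b)

lemma mrel_ne_nil {k : ℕ} {u v : List ℕ} (h : MRel k u v) : u ≠ [] := by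
  intro hu
  subst hu
  rcases h with (⟨a,b,i,_,_,h3,_⟩ | ⟨a,b,h3,_⟩) | (⟨a,b,i,_,_,_,h3⟩ | ⟨a,b,_,h3⟩) <;>
    · have := congrArg List.length h3
      simp at this

lemma list_destruct {u : List ℕ} (h : u ≠ []) : ∃ x t, u = x :: t := by
  cases u with
  | nil => exact absurd rfl h
  | cons x t => exact ⟨x, t, rfl⟩

lemma nbrJ_β {k j : ℕ} (h0 : 0 < j) (hjk : j < k) {u t : List ℕ} (h : MRel k u (j :: t)) :
    (∃ s, u = j :: s ∧ MRel k s t) ∨ u = 0 :: t := by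
  obtain ⟨x, r, rfl⟩ := list_destruct (mrel_ne_nil h)
  rcases mrel_cons h with ⟨rfl, hmr⟩ | ⟨h1,h2,h3,h4⟩ | ⟨h1,h2,h3,h4⟩ | ⟨h1,h2,b,h3,h4⟩
    | ⟨h1,h2,b,h3,h4⟩
  · exact Or.inl ⟨r, rfl, hmr⟩
  · subst h1; subst h4; exact Or.inr rfl
  · omega
  · omega
  · omega

lemma nbrJ_α {k j : ℕ} (h0 : 0 < j) (hjk : j < k) {u t : List ℕ} (h : MRel k u (0 :: t)) :
    (∃ s, u = 0 :: s ∧ MRel k s t) ∨ u = j :: t ∨ OtherJ k j u t := by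
  obtain ⟨x, r, rfl⟩ := list_destruct (mrel_ne_nil h)
  rcases mrel_cons h with ⟨rfl, hmr⟩ | ⟨h1,h2,h3,h4⟩ | ⟨h1,h2,h3,h4⟩ | ⟨h1,h2,b,h3,h4⟩
    | ⟨h1,h2,b,h3,h4⟩
  · exact Or.inl ⟨r, rfl, hmr⟩
  · omega
  · subst h4
    by_cases hxj : x = j
    · subst hxj; exact Or.inr (Or.inl rfl)
    · exact Or.inr (Or.inr (Or.inl ⟨x, hxj, h2, h3, rfl⟩))
  · omega
  · subst h2; subst h3; subst h4
    exact Or.inr (Or.inr (Or.inr ⟨b, rfl, rfl⟩))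

lemma othJ_not {k j : ℕ} (h0 : 0 < j) (hjk : j < k) {u t s : List ℕ}
    (ho : OtherJ k j u t) : ¬ MRel k u (j :: s) := by
  intro h
  rcases ho with ⟨j', hj1, hj2, hj3, rfl⟩ | ⟨b, hb, rfl⟩
  · rcases mrel_cons h with ⟨h1, _⟩ | ⟨h1,h2,h3,_⟩ | ⟨h1,h2,h3,_⟩ | ⟨h1,h2,_⟩ | ⟨h1,h2,_⟩ <;>
      omega
  · rcases mrel_cons h with ⟨h1, _⟩ | ⟨h1,h2,h3,_⟩ | ⟨h1,h2,h3,_⟩ | ⟨h1,h2,_⟩ | ⟨h1,h2,_⟩ <;>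
      omega

lemma othJ_ne_α {k j : ℕ} (h0 : 0 < j) (hjk : j < k) {u t s : List ℕ}
    (ho : OtherJ k j u t) : u ≠ 0 :: s := by
  rcases ho with ⟨j', hj1, hj2, hj3, rfl⟩ | ⟨b, hb, rfl⟩ <;>
    · intro hc; injection hc with h1 _; omega

/-- the `{0,j}` cross specification -/
def jSpec (k j : ℕ) (h0 : 0 < j) (hjk : j < k) : CrossSpec k where
  δ := 1
  α t := 0 :: t
  β t := j :: t
  Oth := OtherJ k j
  len_α t := by simp
  len_β t := by simp
  gp_α h := .cons 0 _ (by omega) h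
  gp_α' h := genPell_cons_lt h (by omega)
  gp_β h := .cons j _ hjk h
  inj_α h := by injection h
  inj_β h := by injection h
  αβ_ne h := by injection h with h1 _; omega
  cross t := mrel_cross h0 hjk t
  tail_α := mrel_lift
  tail_β := mrel_lift
  nbr_β _ h := nbrJ_β h0 hjk h
  nbr_α _ h := nbrJ_α h0 hjk h
  oth_not ho := othJ_not h0 hjk ho
  oth_ne_α ho := othJ_ne_α h0 hjk ho

lemma nbrKK_β {k : ℕ} (hk : 1 ≤ k) {u t : List ℕ} (hu : GenPell k u)
    (h : MRel k u (k :: k :: t)) :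
    (∃ s, u = k :: k :: s ∧ MRel k s t) ∨ u = 0 :: 0 :: t := by
  obtain ⟨x, r, rfl⟩ := list_destruct (mrel_ne_nil h)
  rcases mrel_cons h with ⟨rfl, hmr⟩ | ⟨h1,h2,h3,h4⟩ | ⟨h1,h2,h3,h4⟩ | ⟨h1,h2,b,h3,h4⟩
    | ⟨h1,h2,b,h3,h4⟩
  · obtain ⟨b, rfl, _⟩ := genPell_k_head hu hk
    rcases mrel_cons hmr with ⟨_, hmr2⟩ | ⟨h1,h2,h3,h4⟩ | ⟨h1,h2,h3,h4⟩ | ⟨h1,h2,b',h3,h4⟩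
      | ⟨h1,h2,b',h3,h4⟩
    · exact Or.inl ⟨b, rfl, hmr2⟩
    · omega
    · omega
    · omega
    · omega
  · omega
  · omega
  · subst h1
    injection h4 with _ h4
    subst h4 h3
    exact Or.inr rfl
  · omega

lemma nbrKK_α {k : ℕ} (hk : 1 ≤ k) {u t : List ℕ}
    (h : MRel k u (0 :: 0 :: t)) :
    (∃ s, u = 0 :: 0 :: s ∧ MRel k s t) ∨ u = k :: k :: t ∨ OtherKK k u t := by
  obtain ⟨x, r, rfl⟩ := list_destruct (mrel_ne_nil h)
  rcases mrel_cons h with ⟨rfl, hmr⟩ | ⟨h1,h2,h3,h4⟩ | ⟨h1,h2,h3,h4⟩ | ⟨h1,h2,b,h3,h4⟩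
    | ⟨h1,h2,b,h3,h4⟩
  · -- x = 0, MRel r (0 :: t)
    obtain ⟨x', r', rfl⟩ := list_destruct (mrel_ne_nil hmr)
    rcases mrel_cons hmr with ⟨rfl, hmr2⟩ | ⟨h1,h2,h3,h4⟩ | ⟨h1,h2,h3,h4⟩ | ⟨h1,h2,b,h3,h4⟩
      | ⟨h1,h2,b,h3,h4⟩
    · exact Or.inl ⟨r', rfl, hmr2⟩
    · omega
    · subst h4; exact Or.inr (Or.inr (Or.inr (Or.inl ⟨x', h2, h3, rfl⟩)))
    · omega
    · subst h2; subst h3; subst h4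
      exact Or.inr (Or.inr (Or.inr (Or.inr ⟨b, rfl, rfl⟩)))
  · omega
  · subst h4; exact Or.inr (Or.inr (Or.inl ⟨x, h2, h3, rfl⟩))
  · omega
  · subst h2
    injection h3 with _ h3
    subst h3 h4
    exact Or.inr (Or.inl rfl)

lemma othKK_not {k : ℕ} (hk : 1 ≤ k) {u t s : List ℕ}
    (ho : OtherKK k u t) : ¬ MRel k u (k :: k :: s) := by
  intro h
  rcases ho with ⟨j', hj1, hj2, rfl⟩ | ⟨x', hx1, hx2, rfl⟩ | ⟨b, hb, rfl⟩
  · rcases mrel_cons h with ⟨h1, _⟩ | ⟨h1,h2,h3,_⟩ | ⟨h1,h2,h3,_⟩ | ⟨h1,h2,_⟩ | ⟨h1,h2,_⟩ <;>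
      omega
  · rcases mrel_cons h with ⟨h1, h⟩ | ⟨h1,h2,h3,_⟩ | ⟨h1,h2,h3,_⟩ | ⟨h1,h2,b',h3,h4⟩
      | ⟨h1,h2,b',h3,h4⟩
    · omega
    · omega
    · omega
    · injection h3 with h3 _; omega
    · omega
  · rcases mrel_cons h with ⟨h1, h⟩ | ⟨h1,h2,h3,_⟩ | ⟨h1,h2,h3,_⟩ | ⟨h1,h2,b',h3,h4⟩
      | ⟨h1,h2,b',h3,h4⟩
    · omega
    · omega
    · omega
    · injection h3 with h3 _; omega
    · omega

lemma othKK_ne_α {k : ℕ} (hk : 1 ≤ k) {u t s : List ℕ}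
    (ho : OtherKK k u t) : u ≠ 0 :: 0 :: s := by
  rcases ho with ⟨j', hj1, hj2, rfl⟩ | ⟨x', hx1, hx2, rfl⟩ | ⟨b, hb, rfl⟩ <;>
    · intro hc
      injection hc with h1 hc
      try injection hc with h2 _
      omega

/-- the `{00,kk}` cross specification -/
def kkSpec (k : ℕ) (hk : 1 ≤ k) : CrossSpec k where
  δ := 2
  α t := 0 :: 0 :: t
  β t := k :: k :: t
  Oth := OtherKK k
  len_α t := by simp
  len_β t := by simp
  gp_α h := .cons 0 _ (by omega) (.cons 0 _ (by omega) h)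
  gp_α' h := genPell_cons_lt (genPell_cons_lt h (by omega)) (by omega)
  gp_β h := .kk _ h
  inj_α h := by injection h with _ h; injection h
  inj_β h := by injection h with _ h; injection h
  αβ_ne h := by injection h with h1 _; omega
  cross t := mrel_crosskk t
  tail_α h := mrel_lift (mrel_lift h)
  tail_β h := mrel_lift (mrel_lift h)
  nbr_β hu h := nbrKK_β hk hu h
  nbr_α _ h := nbrKK_α hk h
  oth_not ho := othKK_not hk ho
  oth_ne_α ho := othKK_ne_α hk ho

def IsCubeF {N k : ℕ} (S : Set (PellVtx N k)) : Prop :=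
  ∃ p : ℕ, Nonempty ((MunariniGraph N k).induce S ≃g QF p)

lemma walk_ind {V : Type} {G : SimpleGraph V} {P : V → Prop}
    (hstep : ∀ a b, G.Adj a b → P a → P b) :
    ∀ {u v : V}, G.Walk u v → P u → P v := by
  intro u v w
  induction w with
  | nil => exact id
  | cons h _ ih => exact fun hu => ih (hstep _ _ h hu)

theorem cross_classify {N k : ℕ} (CS : CrossSpec k) {m : ℕ} (hδ : m + CS.δ = N)
    {S : Set (PellVtx N k)} {p : ℕ} (φ : (MunariniGraph N k).induce S ≃g QF p)
    {u₀ v₀ : ↥S} {t₀ : List ℕ} (hu₀ : u₀.1.1 = CS.α t₀) (hv₀ : v₀.1.1 = CS.β t₀) :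
    ∃ T : Set (PellVtx m k), IsCubeF T ∧
      ∀ u : PellVtx N k, u ∈ S ↔
        ∃ t : PellVtx m k, t ∈ T ∧ (u.1 = CS.α t.1 ∨ u.1 = CS.β t.1) := by
  classical
  have hne₀ : u₀ ≠ v₀ := by
    intro hc
    exact CS.αβ_ne (t := t₀) (t' := t₀) (by rw [← hu₀, ← hv₀, hc])
  have hadj₀ : ((MunariniGraph N k).induce S).Adj u₀ v₀ := by
    rw [ind_adj, madj_iff]
    exact ⟨fun hc => hne₀ (Subtype.ext hc), by rw [hu₀, hv₀]; exact CS.cross t₀⟩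
  obtain ⟨d, hd⟩ := QF_adj.mp (φ.map_rel_iff.mpr hadj₀)
  set c0 := φ u₀ d with hc0
  set P : ↥S → Prop := fun u => ∃ (v : ↥S) (t : List ℕ),
    ((u.1.1 = CS.α t ∧ v.1.1 = CS.β t ∧ φ u d = c0) ∨
     (u.1.1 = CS.β t ∧ v.1.1 = CS.α t ∧ φ u d = !c0)) ∧
    φ v = Function.update (φ u) d (!(φ u d)) with hPdef
  have hPu₀ : P u₀ := ⟨v₀, t₀, Or.inl ⟨hu₀, hv₀, rfl⟩, hd⟩
  have hstep : ∀ a b : ↥S, ((MunariniGraph N k).induce S).Adj a b → P a → P b := by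
    rintro u u' hadj ⟨v, t, hcase, hφv⟩
    by_cases huv : u' = v
    · subst huv
      refine ⟨u, t, ?_, by rw [hφv]; exact (update_flip_invol (φ u) d).symm⟩
      have h1 : φ u' d = !(φ u d) := by rw [hφv, Function.update_self]
      rcases hcase with ⟨h2, h3, h4⟩ | ⟨h2, h3, h4⟩
      · exact Or.inr ⟨h3, h2, by rw [h1, h4]⟩
      · exact Or.inl ⟨h3, h2, by rw [h1, h4]; simp⟩
    · have hMuu' : MRel k u.1.1 u'.1.1 := (madj_iff.mp (ind_adj.mp hadj)).2
      have hgpu' : GenPell k u'.1.1 := u'.1.2.2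
      obtain ⟨e, he⟩ := QF_adj.mp (φ.map_rel_iff.mpr hadj)
      have hed : e ≠ d := by
        intro hc; subst hc
        exact huv (φ.injective (by rw [he, hφv]))
      set w' := Function.update (φ v) e (!(φ v) e) with hw'
      have hw'2 : w' = Function.update (φ u') d (!(φ u') d) := by
        rw [hw', he, hφv]
        exact update_flip_comm (φ u) (Ne.symm hed)
      set x := φ.symm w' with hxdef
      have hφx : φ x = w' := φ.apply_symm_apply w'
      have hadj_vx : ((MunariniGraph N k).induce S).Adj v x := by
        rw [← φ.map_rel_iff, hφx]
        exact QF_adj.mpr ⟨e, hw'⟩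
      have hadj_u'x : ((MunariniGraph N k).induce S).Adj u' x := by
        rw [← φ.map_rel_iff, hφx]
        exact QF_adj.mpr ⟨d, hw'2⟩
      have hMxv : MRel k x.1.1 v.1.1 := (madj_iff.mp (ind_adj.mp hadj_vx)).2.symm
      have hMu'x : MRel k u'.1.1 x.1.1 := (madj_iff.mp (ind_adj.mp hadj_u'x)).2
      have hxu : x ≠ u := by
        intro hc
        have h1 : φ x d = !(φ u d) := by
          rw [hφx, hw', Function.update_of_ne (Ne.symm hed), hφv, Function.update_self]
        rw [hc] at h1
        simp at h1
      have hu'd : φ u' d = φ u d := by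
        rw [he, Function.update_of_ne (Ne.symm hed)]
      rcases hcase with ⟨hA1, hA2, hA3⟩ | ⟨hB1, hB2, hB3⟩
      · -- u on the α side
        rcases CS.nbr_β x.1.2.2 (hA2 ▸ hMxv) with ⟨s', hxs', hs't⟩ | hxα
        · rcases CS.nbr_α hgpu' (hA1 ▸ hMuu'.symm) with ⟨s, hu's, hst⟩ | hu'β | hoth
          · have hss' : s = s' := by
              have hgs : GenPell k s := CS.gp_α' (hu's ▸ hgpu')
              exact (CS.cross_iff hgs).mp (by rw [← hu's, ← hxs']; exact hMu'x)
            refine ⟨x, s, Or.inl ⟨hu's, by rw [hxs', hss'], by rw [hu'd, hA3]⟩, ?_⟩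
            rw [hφx, hw'2, hu'd]
          · exact absurd (Subtype.ext (Subtype.ext (hu'β.trans hA2.symm))) huv
          · exact absurd (hxs' ▸ hMu'x) (CS.oth_not hoth)
        · exact absurd (Subtype.ext (Subtype.ext (hxα.trans hA1.symm))) hxu
      · -- u on the β side
        rcases CS.nbr_β hgpu' (hB1 ▸ hMuu'.symm) with ⟨s, hu's, hst⟩ | hu'α
        · rcases CS.nbr_α x.1.2.2 (hB2 ▸ hMxv) with ⟨s₃, hxs₃, hs₃t⟩ | hxβ | hoth
          · have hss : s₃ = s := by
              have hgs : GenPell k s₃ := CS.gp_α' (hxs₃ ▸ x.1.2.2)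
              exact (CS.cross_iff hgs).mp (by rw [← hxs₃, ← hu's]; exact hMu'x.symm)
            refine ⟨x, s, Or.inr ⟨hu's, by rw [hxs₃, hss], by rw [hu'd, hB3]⟩, ?_⟩
            rw [hφx, hw'2, hu'd]
          · exact absurd (Subtype.ext (Subtype.ext (hxβ.trans hB1.symm))) hxu
          · exact absurd (hu's ▸ hMu'x.symm) (CS.oth_not hoth)
        · exact absurd (Subtype.ext (Subtype.ext (hu'α.trans hB2.symm))) huv
  have hall : ∀ u : ↥S, P u := by
    intro u
    have hr : ((MunariniGraph N k).induce S).Reachable u₀ u := by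
      have h2 := (QF_preconnected p (φ u₀) (φ u)).map φ.symm.toHom
      simpa using h2
    obtain ⟨w⟩ := hr
    exact walk_ind hstep w hPu₀
  have hlenα : ∀ t : PellVtx m k, (CS.α t.1).length = N := fun t => by
    rw [CS.len_α, t.2.1, hδ]
  set T : Set (PellVtx m k) := {t | ∃ u : ↥S, u.1.1 = CS.α t.1} with hT
  have hdesc : ∀ u : PellVtx N k, u ∈ S ↔
      ∃ t : PellVtx m k, t ∈ T ∧ (u.1 = CS.α t.1 ∨ u.1 = CS.β t.1) := by
    intro u
    constructor
    · intro hu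
      obtain ⟨v, t, hcase, _⟩ := hall ⟨u, hu⟩
      rcases hcase with ⟨h1, h2, _⟩ | ⟨h1, h2, _⟩
      · have hgpt : GenPell k t := CS.gp_α' (h1 ▸ u.2.2)
        have hlent : t.length = m := by
          have h4 := u.2.1; rw [h1, CS.len_α] at h4; omega
        exact ⟨⟨t, hlent, hgpt⟩, ⟨⟨u, hu⟩, h1⟩, Or.inl h1⟩
      · have hgpt : GenPell k t := CS.gp_α' (h2 ▸ v.1.2.2)
        have hlent : t.length = m := by
          have h4 := v.1.2.1; rw [h2, CS.len_α] at h4; omega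
        exact ⟨⟨t, hlent, hgpt⟩, ⟨v, h2⟩, Or.inr h1⟩
    · rintro ⟨t, ⟨w, hw⟩, hu | hu⟩
      · have h5 : u = w.1 := Subtype.ext (by rw [hu, hw])
        rw [h5]; exact w.2
      · obtain ⟨v, t', hcase, _⟩ := hall w
        rcases hcase with ⟨h1, h2, _⟩ | ⟨h1, h2, _⟩
        · have ht't : t' = t.1 := CS.inj_α (by rw [← h1, hw])
          have h5 : u = v.1 := Subtype.ext (by rw [hu, h2, ht't])
          rw [h5]; exact v.2
        · exact absurd (hw.symm.trans h1) CS.αβ_ne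
  cases p with
  | zero => exact d.elim0
  | succ q =>
    refine ⟨T, ⟨q, ?_⟩, hdesc⟩
    set vA : ↥T → PellVtx N k := fun t => ⟨CS.α t.1.1, hlenα t.1, CS.gp_α t.1.2.2⟩ with hvA
    have hmemA : ∀ t : ↥T, vA t ∈ S := by
      rintro ⟨t, w, hw⟩
      have h5 : vA ⟨t, w, hw⟩ = w.1 := Subtype.ext (by simp [hvA, hw])
      rw [h5]; exact w.2
    have hside : ∀ t : ↥T, φ ⟨vA t, hmemA t⟩ d = c0 := by
      intro t
      obtain ⟨v, t', hcase, _⟩ := hall ⟨vA t, hmemA t⟩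
      rcases hcase with ⟨_, _, h3⟩ | ⟨h1, _, _⟩
      · exact h3
      · exact absurd h1 CS.αβ_ne
    set F : ↥T → ↥{x : Fin (q+1) → Bool | x d = c0} :=
      fun t => ⟨φ ⟨vA t, hmemA t⟩, hside t⟩ with hF
    have hFinj : Function.Injective F := by
      intro a b hab
      have h5 := φ.injective (Subtype.ext_iff.mp hab)
      have h6 : vA a = vA b := Subtype.ext_iff.mp h5
      exact Subtype.ext (Subtype.ext (CS.inj_α (Subtype.ext_iff.mp h6)))
    have hFsurj : Function.Surjective F := by
      rintro ⟨x, hx⟩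
      obtain ⟨v, t, hcase, _⟩ := hall (φ.symm x)
      rcases hcase with ⟨h1, _, _⟩ | ⟨_, _, h3⟩
      · have hgpt : GenPell k t := CS.gp_α' (h1 ▸ (φ.symm x).1.2.2)
        have hlent : t.length = m := by
          have h4 := (φ.symm x).1.2.1; rw [h1, CS.len_α] at h4; omega
        refine ⟨⟨⟨t, hlent, hgpt⟩, ⟨φ.symm x, h1⟩⟩, ?_⟩
        apply Subtype.ext
        have h6 : (⟨vA ⟨⟨t, hlent, hgpt⟩, ⟨φ.symm x, h1⟩⟩, hmemA _⟩ : ↥S) = φ.symm x :=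
          Subtype.ext (Subtype.ext (by simp [hvA, h1]))
        show φ _ = x
        rw [h6, φ.apply_symm_apply]
      · rw [φ.apply_symm_apply] at h3
        rw [hx] at h3
        simp at h3
    have hFrel : ∀ a b : ↥T,
        ((QF (q+1)).induce {x : Fin (q+1) → Bool | x d = c0}).Adj (F a) (F b) ↔
          ((MunariniGraph m k).induce T).Adj a b := by
      intro a b
      rw [ind_adj, ind_adj, madj_iff]
      show (QF (q+1)).Adj (φ _) (φ _) ↔ _
      rw [φ.map_rel_iff, ind_adj, madj_iff]
      constructor
      · rintro ⟨hne, hmr⟩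
        refine ⟨?_, (CS.tail_α_iff a.1.2.2 b.1.2.2).mp hmr⟩
        intro hc
        exact hne (Subtype.ext (show CS.α a.1.1 = CS.α b.1.1 by rw [Subtype.ext_iff.mp hc]))
      · rintro ⟨hne, hmr⟩
        refine ⟨?_, (CS.tail_α_iff a.1.2.2 b.1.2.2).mpr hmr⟩
        intro hc
        exact hne (Subtype.ext (CS.inj_α (Subtype.ext_iff.mp hc)))
    exact ⟨(RelIso.mk (Equiv.ofBijective F ⟨hFinj, hFsurj⟩)
      (fun {a b} => hFrel a b)).trans (sideIso q d c0)⟩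

structure UnSpec (k : ℕ) : Type 1 where
  δ : ℕ
  γ : List ℕ → List ℕ
  len_γ : ∀ t, (γ t).length = t.length + δ
  gp_γ : ∀ {t}, GenPell k t → GenPell k (γ t)
  gp_γ' : ∀ {t}, GenPell k (γ t) → GenPell k t
  inj_γ : ∀ {t t'}, γ t = γ t' → t = t'
  tail_iff : ∀ {t t'}, MRel k (γ t) (γ t') ↔ MRel k t t'

def iSpec (k i : ℕ) (hik : i < k) : UnSpec k where
  δ := 1
  γ t := i :: t
  len_γ t := by simp
  gp_γ h := .cons i _ hik h
  gp_γ' h := genPell_cons_lt h hik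
  inj_γ h := by injection h
  tail_iff := mrel_cons_same (by omega)

def kk2Spec (k : ℕ) (hk : 1 ≤ k) : UnSpec k where
  δ := 2
  γ t := k :: k :: t
  len_γ t := by simp
  gp_γ h := .kk _ h
  gp_γ' h := by
    cases h with
    | cons _ _ hik _ => omega
    | kk _ hs => exact hs
  inj_γ h := by injection h with _ h; injection h
  tail_iff := (mrel_cons_same hk).trans (mrel_cons_same hk)

lemma unary_iso {N k : ℕ} (US : UnSpec k) {m : ℕ} (hδ : m + US.δ = N)
    {S : Set (PellVtx N k)} {T : Set (PellVtx m k)}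
    (hdesc : ∀ u : PellVtx N k, u ∈ S ↔ ∃ t ∈ T, u.1 = US.γ t.1) :
    Nonempty ((MunariniGraph m k).induce T ≃g (MunariniGraph N k).induce S) := by
  have hlen : ∀ t : PellVtx m k, (US.γ t.1).length = N := fun t => by
    rw [US.len_γ, t.2.1, hδ]
  set vG : ↥T → PellVtx N k := fun t => ⟨US.γ t.1.1, hlen t.1, US.gp_γ t.1.2.2⟩ with hvG
  have hmem : ∀ t : ↥T, vG t ∈ S := fun t => (hdesc _).mpr ⟨t.1, t.2, rfl⟩
  set F : ↥T → ↥S := fun t => ⟨vG t, hmem t⟩ with hF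
  have hFinj : Function.Injective F := by
    intro a b hab
    have h6 : vG a = vG b := Subtype.ext_iff.mp hab
    exact Subtype.ext (Subtype.ext (US.inj_γ (Subtype.ext_iff.mp h6)))
  have hFsurj : Function.Surjective F := by
    rintro ⟨u, hu⟩
    obtain ⟨t, ht, hut⟩ := (hdesc u).mp hu
    refine ⟨⟨t, ht⟩, ?_⟩
    exact Subtype.ext (Subtype.ext hut.symm)
  refine ⟨RelIso.mk (Equiv.ofBijective F ⟨hFinj, hFsurj⟩) ?_⟩
  intro a b
  show ((MunariniGraph N k).induce S).Adj (F a) (F b) ↔ _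
  rw [ind_adj, ind_adj, madj_iff, madj_iff]
  constructor
  · rintro ⟨hne, hmr⟩
    refine ⟨?_, US.tail_iff.mp hmr⟩
    intro hc
    exact hne (Subtype.ext (show US.γ a.1.1 = US.γ b.1.1 by rw [Subtype.ext_iff.mp hc]))
  · rintro ⟨hne, hmr⟩
    refine ⟨?_, US.tail_iff.mpr hmr⟩
    intro hc
    exact hne (Subtype.ext (US.inj_γ (Subtype.ext_iff.mp hc)))

lemma unary_cube_of {N k : ℕ} (US : UnSpec k) {m : ℕ} (hδ : m + US.δ = N)
    {S : Set (PellVtx N k)} {T : Set (PellVtx m k)}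
    (hdesc : ∀ u : PellVtx N k, u ∈ S ↔ ∃ t ∈ T, u.1 = US.γ t.1)
    (hT : IsCubeF T) : IsCubeF S := by
  obtain ⟨q, ⟨isoT⟩⟩ := hT
  obtain ⟨isoTS⟩ := unary_iso US hδ hdesc
  exact ⟨q, ⟨isoTS.symm.trans isoT⟩⟩

lemma unary_cube_to {N k : ℕ} (US : UnSpec k) {m : ℕ} (hδ : m + US.δ = N)
    {S : Set (PellVtx N k)} {T : Set (PellVtx m k)}
    (hdesc : ∀ u : PellVtx N k, u ∈ S ↔ ∃ t ∈ T, u.1 = US.γ t.1)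
    (hS : IsCubeF S) : IsCubeF T := by
  obtain ⟨q, ⟨isoS⟩⟩ := hS
  obtain ⟨isoTS⟩ := unary_iso US hδ hdesc
  exact ⟨q, ⟨isoTS.trans isoS⟩⟩

lemma pair_cube {N k : ℕ} (CS : CrossSpec k) {m : ℕ} (hδ : m + CS.δ = N)
    {S : Set (PellVtx N k)} {T : Set (PellVtx m k)}
    (hdesc : ∀ u : PellVtx N k, u ∈ S ↔
      ∃ t ∈ T, u.1 = CS.α t.1 ∨ u.1 = CS.β t.1)
    (hT : IsCubeF T) : IsCubeF S := by
  obtain ⟨q, ⟨isoT⟩⟩ := hT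
  have hlenA : ∀ t : PellVtx m k, (CS.α t.1).length = N := fun t => by
    rw [CS.len_α, t.2.1, hδ]
  have hlenB : ∀ t : PellVtx m k, (CS.β t.1).length = N := fun t => by
    rw [CS.len_β, t.2.1, hδ]
  set vA : ↥T → PellVtx N k := fun t => ⟨CS.α t.1.1, hlenA t.1, CS.gp_α t.1.2.2⟩ with hvA
  set vB : ↥T → PellVtx N k := fun t => ⟨CS.β t.1.1, hlenB t.1, CS.gp_β t.1.2.2⟩ with hvB
  have hmemA : ∀ t : ↥T, vA t ∈ S := fun t => (hdesc _).mpr ⟨t.1, t.2, Or.inl rfl⟩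
  have hmemB : ∀ t : ↥T, vB t ∈ S := fun t => (hdesc _).mpr ⟨t.1, t.2, Or.inr rfl⟩
  set G : Bool × ↥T → ↥S := fun bt =>
    bif bt.1 then ⟨vB bt.2, hmemB bt.2⟩ else ⟨vA bt.2, hmemA bt.2⟩ with hG
  have hGinj : Function.Injective G := by
    rintro ⟨a1, a2⟩ ⟨b1, b2⟩ hab
    have hv := Subtype.ext_iff.mp hab
    cases a1 <;> cases b1 <;> simp only [hG, cond_true, cond_false] at hv
    · exact Prod.ext rfl (Subtype.ext (Subtype.ext (CS.inj_α (Subtype.ext_iff.mp hv))))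
    · exact absurd (Subtype.ext_iff.mp hv) CS.αβ_ne
    · exact absurd (Subtype.ext_iff.mp hv).symm CS.αβ_ne
    · exact Prod.ext rfl (Subtype.ext (Subtype.ext (CS.inj_β (Subtype.ext_iff.mp hv))))
  have hGsurj : Function.Surjective G := by
    rintro ⟨u, hu⟩
    obtain ⟨t, ht, hut | hut⟩ := (hdesc u).mp hu
    · exact ⟨(false, ⟨t, ht⟩), Subtype.ext (Subtype.ext hut.symm)⟩
    · exact ⟨(true, ⟨t, ht⟩), Subtype.ext (Subtype.ext hut.symm)⟩
  set H : Bool × ↥T → (Fin (q+1) → Bool) := fun bt => Fin.cons bt.1 (isoT bt.2) with hH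
  have hHinj : Function.Injective H := by
    rintro ⟨a1, a2⟩ ⟨b1, b2⟩ hab
    rw [hH] at hab
    rw [Fin.cons_inj] at hab
    exact Prod.ext hab.1 (isoT.injective hab.2)
  have hHsurj : Function.Surjective H := by
    intro x
    obtain ⟨t, ht⟩ := isoT.surjective (Fin.tail x)
    exact ⟨(x 0, t), by rw [hH]; simp only [ht]; exact Fin.cons_self_tail x⟩
  have hcore : ∀ a b : Bool × ↥T, (QF (q+1)).Adj (H a) (H b) ↔
      ((MunariniGraph N k).induce S).Adj (G a) (G b) := by
    rintro ⟨a1, a2⟩ ⟨b1, b2⟩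
    rw [hH]
    simp only []
    rw [qf_cons_adj, ind_adj, madj_iff]
    have hiso_adj : (QF q).Adj (isoT a2) (isoT b2) ↔
        (a2 ≠ b2 ∧ MRel k a2.1.1 b2.1.1) := by
      rw [isoT.map_rel_iff, ind_adj, madj_iff]
      constructor
      · rintro ⟨hne, hmr⟩
        exact ⟨fun hc => hne (congrArg Subtype.val hc), hmr⟩
      · rintro ⟨hne, hmr⟩
        exact ⟨fun hc => hne (Subtype.ext hc), hmr⟩
    have hiso_eq : isoT a2 = isoT b2 ↔ a2 = b2 := EmbeddingLike.apply_eq_iff_eq isoT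
    cases a1 <;> cases b1 <;>
      simp only [hG, cond_true, cond_false, hiso_adj, hiso_eq, ne_eq,
        Bool.false_eq_true, Bool.true_eq_false, false_and, true_and, not_false_eq_true,
        not_true_eq_false, false_or, or_false, and_true, and_false]
    · -- (false, false) : α side both
      constructor
      · rintro ⟨hne, hmr⟩
        exact ⟨fun hc => hne (Subtype.ext (Subtype.ext (CS.inj_α (Subtype.ext_iff.mp hc)))),
          CS.tail_α (by exact hmr)⟩
      · rintro ⟨hne, hmr⟩
        refine ⟨?_, (CS.tail_α_iff a2.1.2.2 b2.1.2.2).mp hmr⟩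
        intro hc
        exact hne (Subtype.ext (show CS.α a2.1.1 = CS.α b2.1.1 by
          rw [Subtype.ext_iff.mp hc]))
    · -- (false, true) : α vs β : adjacency iff equal tails
      constructor
      · rintro rfl
        exact ⟨fun hc => CS.αβ_ne (Subtype.ext_iff.mp hc), CS.cross _⟩
      · rintro ⟨hne, hmr⟩
        exact Subtype.ext (Subtype.ext ((CS.cross_iff a2.1.2.2).mp hmr))
    · -- (true, false) : β vs α
      constructor
      · rintro rfl
        exact ⟨fun hc => CS.αβ_ne (Subtype.ext_iff.mp hc).symm, (CS.cross _).symm⟩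
      · rintro ⟨hne, hmr⟩
        exact Subtype.ext (Subtype.ext ((CS.cross_iff b2.1.2.2).mp hmr.symm).symm)
    · -- (true, true) : β side both
      constructor
      · rintro ⟨hne, hmr⟩
        exact ⟨fun hc => hne (Subtype.ext (Subtype.ext (CS.inj_β (Subtype.ext_iff.mp hc)))),
          CS.tail_β (by exact hmr)⟩
      · rintro ⟨hne, hmr⟩
        refine ⟨?_, (CS.tail_β_iff a2.1.2.2 b2.1.2.2).mp hmr⟩
        intro hc
        exact hne (Subtype.ext (show CS.β a2.1.1 = CS.β b2.1.1 by
          rw [Subtype.ext_iff.mp hc]))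
  set EG : Bool × ↥T ≃ ↥S := Equiv.ofBijective G ⟨hGinj, hGsurj⟩ with hEG
  set EH : Bool × ↥T ≃ (Fin (q+1) → Bool) := Equiv.ofBijective H ⟨hHinj, hHsurj⟩ with hEH
  refine ⟨q + 1, ⟨RelIso.mk (EG.symm.trans EH) ?_⟩⟩
  intro x y
  obtain ⟨a, rfl⟩ := EG.surjective x
  obtain ⟨b, rfl⟩ := EG.surjective y
  simp only [Equiv.trans_apply, Equiv.symm_apply_apply]
  exact (hcore a b).trans (by rfl)

theorem classify_step {n k : ℕ} (hk : 1 ≤ k) {S : Set (PellVtx (n+2) k)} (hS : IsCubeF S) :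
    (∃ i, i < k ∧ ∃ T : Set (PellVtx (n+1) k), IsCubeF T ∧
        ∀ u : PellVtx (n+2) k, u ∈ S ↔ ∃ t ∈ T, u.1 = i :: t.1) ∨
    (∃ j, 0 < j ∧ j < k ∧ ∃ T : Set (PellVtx (n+1) k), IsCubeF T ∧
        ∀ u : PellVtx (n+2) k, u ∈ S ↔ ∃ t ∈ T, u.1 = 0 :: t.1 ∨ u.1 = j :: t.1) ∨
    (∃ T : Set (PellVtx n k), IsCubeF T ∧
        ∀ u : PellVtx (n+2) k, u ∈ S ↔ ∃ t ∈ T, u.1 = k :: k :: t.1) ∨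
    (∃ T : Set (PellVtx n k), IsCubeF T ∧
        ∀ u : PellVtx (n+2) k, u ∈ S ↔
          ∃ t ∈ T, u.1 = 0 :: 0 :: t.1 ∨ u.1 = k :: k :: t.1) := by
  classical
  obtain ⟨p, ⟨φ⟩⟩ := hS
  have hne_nil : ∀ u : ↥S, u.1.1 ≠ [] := by
    intro u hc
    have := u.1.2.1
    rw [hc] at this
    simp at this
  by_cases hcr : ∃ u v : ↥S, ((MunariniGraph (n+2) k).induce S).Adj u v ∧
      u.1.1.headI ≠ v.1.1.headI
  · obtain ⟨u, v, hadj, hhd⟩ := hcr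
    have hMuv : MRel k u.1.1 v.1.1 := (madj_iff.mp (ind_adj.mp hadj)).2
    obtain ⟨x, tu, hxu⟩ := list_destruct (hne_nil u)
    obtain ⟨y, tv, hyv⟩ := list_destruct (hne_nil v)
    have hxy : x ≠ y := by
      rw [hxu, hyv] at hhd
      exact hhd
    rw [hxu, hyv] at hMuv
    rcases mrel_cons hMuv with ⟨h1, _⟩ | ⟨h1,h2,h3,h4⟩ | ⟨h1,h2,h3,h4⟩ | ⟨h1,h2,b,h3,h4⟩
      | ⟨h1,h2,b,h3,h4⟩
    · exact absurd h1 hxy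
    · -- u = 0 :: t, v = y :: t
      subst h1; subst h4
      obtain ⟨T, hT, hdesc⟩ := cross_classify (m := n+1) (jSpec k y h2 h3) rfl φ
        (u₀ := u) (v₀ := v) (t₀ := tu) hxu hyv
      exact Or.inr (Or.inl ⟨y, h2, h3, T, hT, hdesc⟩)
    · -- v = 0 :: t, u = x :: t
      subst h1; subst h4
      obtain ⟨T, hT, hdesc⟩ := cross_classify (m := n+1) (jSpec k x h2 h3) rfl φ
        (u₀ := v) (v₀ := u) (t₀ := tu) hyv hxu
      exact Or.inr (Or.inl ⟨x, h2, h3, T, hT, hdesc⟩)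
    · -- u = 0 :: 0 :: b, v = k :: k :: b
      rw [h1, h3] at hxu
      rw [h2, h4] at hyv
      obtain ⟨T, hT, hdesc⟩ := cross_classify (m := n) (kkSpec k hk) rfl φ
        (u₀ := u) (v₀ := v) (t₀ := b) hxu hyv
      exact Or.inr (Or.inr (Or.inr ⟨T, hT, hdesc⟩))
    · -- v = 0 :: 0 :: b, u = k :: k :: b
      rw [h1, h3] at hyv
      rw [h2, h4] at hxu
      obtain ⟨T, hT, hdesc⟩ := cross_classify (m := n) (kkSpec k hk) rfl φ
        (u₀ := v) (v₀ := u) (t₀ := b) hyv hxu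
      exact Or.inr (Or.inr (Or.inr ⟨T, hT, hdesc⟩))
  · push_neg at hcr
    set u₀ : ↥S := φ.symm (fun _ => false) with hu₀def
    have hheads : ∀ u : ↥S, u.1.1.headI = u₀.1.1.headI := by
      intro u
      have hr : ((MunariniGraph (n+2) k).induce S).Reachable u₀ u := by
        have h2 := (QF_preconnected p (φ u₀) (φ u)).map φ.symm.toHom
        simpa using h2
      obtain ⟨w⟩ := hr
      exact walk_ind (P := fun u => u.1.1.headI = u₀.1.1.headI)
        (fun a b hab ha => by
          show (b : ↥S).1.1.headI = _
          rw [← hcr a b hab]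
          exact ha) w rfl
    obtain ⟨x₀, r₀, hx₀⟩ := list_destruct (hne_nil u₀)
    have hbound : x₀ ≤ k := genPell_le u₀.1.2.2 x₀ (by rw [hx₀]; exact List.mem_cons_self)
    have hhead : ∀ u : ↥S, u.1.1.headI = x₀ := by
      intro u; rw [hheads u, hx₀]; rfl
    by_cases hlt : x₀ < k
    · set T : Set (PellVtx (n+1) k) := {t | ∃ u : ↥S, u.1.1 = x₀ :: t.1} with hTdef
      have hdesc : ∀ u : PellVtx (n+2) k, u ∈ S ↔ ∃ t ∈ T, u.1 = x₀ :: t.1 := by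
        intro u
        constructor
        · intro hu
          obtain ⟨xu, tu, hxu⟩ := list_destruct (hne_nil ⟨u, hu⟩)
          have hxux₀ : xu = x₀ := by
            have := hhead ⟨u, hu⟩; rw [hxu] at this; exact this
          subst hxux₀
          have hlen : tu.length = n + 1 := by
            have := u.2.1; rw [hxu] at this; simpa using this
          have hgp : GenPell k tu := genPell_cons_lt (hxu ▸ u.2.2) hlt
          exact ⟨⟨tu, hlen, hgp⟩, ⟨⟨u, hu⟩, hxu⟩, hxu⟩
        · rintro ⟨t, ⟨w, hw⟩, hu⟩
          have h5 : u = w.1 := Subtype.ext (hu.trans hw.symm)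
          rw [h5]; exact w.2
      have hcube : IsCubeF T :=
        unary_cube_to (m := n+1) (iSpec k x₀ hlt) rfl hdesc ⟨p, ⟨φ⟩⟩
      exact Or.inl ⟨x₀, hlt, T, hcube, hdesc⟩
    · have hx₀k : x₀ = k := by omega
      rw [hx₀k] at hhead
      have hshape : ∀ u : ↥S, ∃ b, u.1.1 = k :: k :: b ∧ GenPell k b := by
        intro u
        obtain ⟨xu, tu, hxu⟩ := list_destruct (hne_nil u)
        have hxuk : xu = k := by
          have := hhead u; rw [hxu] at this; exact this
        subst hxuk
        obtain ⟨b, hb, hgpb⟩ := genPell_k_head (hxu ▸ u.1.2.2) hk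
        exact ⟨b, by rw [hxu, hb], hgpb⟩
      set T : Set (PellVtx n k) := {t | ∃ u : ↥S, u.1.1 = k :: k :: t.1} with hTdef
      have hdesc : ∀ u : PellVtx (n+2) k, u ∈ S ↔ ∃ t ∈ T, u.1 = k :: k :: t.1 := by
        intro u
        constructor
        · intro hu
          obtain ⟨b, hb, hgpb⟩ := hshape ⟨u, hu⟩
          have hlen : b.length = n := by
            have := u.2.1; rw [hb] at this; simpa using this
          exact ⟨⟨b, hlen, hgpb⟩, ⟨⟨u, hu⟩, hb⟩, hb⟩
        · rintro ⟨t, ⟨w, hw⟩, hu⟩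
          have h5 : u = w.1 := Subtype.ext (hu.trans hw.symm)
          rw [h5]; exact w.2
      have hcube : IsCubeF T :=
        unary_cube_to (m := n) (kk2Spec k hk) rfl hdesc ⟨p, ⟨φ⟩⟩
      exact Or.inr (Or.inr (Or.inl ⟨T, hcube, hdesc⟩))

lemma evenRuns_le {k : ℕ} {w : List ℕ} (h : EvenRuns01 k w) :
    ∀ a ∈ w, a ≤ 2 * k + 1 := by
  induction h with
  | nil => simp
  | cons i s h1 h2 _ ih =>
      intro a ha
      rw [List.mem_cons] at ha
      rcases ha with rfl | ha
      · omega
      · exact ih a ha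
  | zz s _ ih =>
      intro a ha
      rw [List.mem_cons, List.mem_cons] at ha
      rcases ha with rfl | rfl | ha
      · omega
      · omega
      · exact ih a ha
  | oo s _ ih =>
      intro a ha
      rw [List.mem_cons, List.mem_cons] at ha
      rcases ha with rfl | rfl | ha
      · omega
      · omega
      · exact ih a ha

lemma finite_boundedLists {P : List ℕ → Prop} {n m : ℕ}
    (hl : ∀ l, P l → l.length = n) (hb : ∀ l, P l → ∀ a ∈ l, a ≤ m) :
    Finite {l : List ℕ // P l} := by
  refine Finite.of_injective
    (fun l => (fun i : Fin n => (⟨l.1.getD i 0, ?_⟩ : Fin (m+1)))) ?_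
  · rcases Nat.lt_or_ge i.1 l.1.length with h | h
    · rw [List.getD_eq_getElem _ _ h]
      have := hb l.1 l.2 _ (List.getElem_mem h)
      omega
    · rw [List.getD_eq_default _ _ h]
      omega
  · intro a b hab
    apply Subtype.ext
    apply List.ext_getElem
    · rw [hl a.1 a.2, hl b.1 b.2]
    · intro i h1 h2
      have hi : i < n := by rw [← hl a.1 a.2]; exact h1
      have h4 := congrFun hab ⟨i, hi⟩
      have h3 : (a.1).getD i 0 = (b.1).getD i 0 := congrArg Fin.val h4
      rwa [List.getD_eq_getElem _ _ h1, List.getD_eq_getElem _ _ h2] at h3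

instance pellFinite (n k : ℕ) : Finite (PellVtx n k) :=
  finite_boundedLists (m := k) (fun _ h => h.1) (fun _ h => genPell_le h.2)

lemma cube_nonempty {N k : ℕ} {S : Set (PellVtx N k)} (h : IsCubeF S) : S.Nonempty := by
  obtain ⟨p, ⟨φ⟩⟩ := h
  exact ⟨(φ.symm (fun _ => false)).1, (φ.symm (fun _ => false)).2⟩

lemma mcube_iff {N k : ℕ} {S : Set (PellVtx N k)} :
    (∃ p, Nonempty ((MunariniGraph N k).induce S ≃g QCube p)) ↔ IsCubeF S := by
  constructor
  · rintro ⟨p, ⟨ψ⟩⟩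
    obtain ⟨e⟩ := qcube_iso_qf p
    exact ⟨p, ⟨ψ.trans e⟩⟩
  · rintro ⟨p, ⟨ψ⟩⟩
    obtain ⟨e⟩ := qcube_iso_qf p
    exact ⟨p, ⟨ψ.trans e.symm⟩⟩

noncomputable def cubeCount (k n : ℕ) : ℕ :=
  Nat.card {S : Set (PellVtx n k) // IsCubeF S}

noncomputable def wordCount (k n : ℕ) : ℕ :=
  Nat.card {w : List ℕ // w.length = n ∧ EvenRuns01 k w}

lemma evenRuns_inv {k : ℕ} {a : ℕ} {w : List ℕ} (h : EvenRuns01 k (a :: w)) :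
    (2 ≤ a ∧ a ≤ 2 * k ∧ EvenRuns01 k w) ∨
    (a = 0 ∧ ∃ w', w = 0 :: w' ∧ EvenRuns01 k w') ∨
    (a = 1 ∧ ∃ w', w = 1 :: w' ∧ EvenRuns01 k w') := by
  cases h with
  | cons _ _ h1 h2 h3 => exact Or.inl ⟨h1, h2, h3⟩
  | zz s hs => exact Or.inr (Or.inl ⟨rfl, s, rfl, hs⟩)
  | oo s hs => exact Or.inr (Or.inr ⟨rfl, s, rfl, hs⟩)

instance wordFinite (k n : ℕ) : Finite {w : List ℕ // w.length = n ∧ EvenRuns01 k w} :=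
  finite_boundedLists (m := 2*k+1) (fun _ h => h.1) (fun _ h => evenRuns_le h.2)

def rangeEquiv (k : ℕ) : {i : ℕ // 2 ≤ i ∧ i ≤ 2*k} ≃ Fin (2*k-1) where
  toFun i := ⟨i.1 - 2, by omega⟩
  invFun j := ⟨j.1 + 2, by omega⟩
  left_inv i := by
    apply Subtype.ext
    have := i.2
    simp only []
    omega
  right_inv j := by
    apply Fin.ext
    simp only []
    omega

lemma wordCount_zero (k : ℕ) : wordCount k 0 = 1 := by
  rw [wordCount]
  have : Unique {w : List ℕ // w.length = 0 ∧ EvenRuns01 k w} :=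
    { default := ⟨[], rfl, .nil⟩
      uniq := fun w => Subtype.ext (List.length_eq_zero_iff.mp w.2.1) }
  exact Nat.card_unique

lemma wordCount_one (k : ℕ) : wordCount k 1 = 2 * k - 1 := by
  rw [wordCount]
  have hbij : Function.Bijective
      (fun i : {i : ℕ // 2 ≤ i ∧ i ≤ 2*k} =>
        (⟨[i.1], rfl, .cons _ _ i.2.1 i.2.2 .nil⟩ :
          {w : List ℕ // w.length = 1 ∧ EvenRuns01 k w})) := by
    constructor
    · intro a b hab
      have := Subtype.ext_iff.mp hab
      apply Subtype.ext
      injection this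
    · rintro ⟨w, hw1, hw2⟩
      obtain ⟨a, w₁, rfl⟩ := list_destruct (u := w)
        (by intro hc; rw [hc] at hw1; simp at hw1)
      have hw₁ : w₁ = [] := by
        rw [List.length_cons] at hw1
        exact List.length_eq_zero_iff.mp (by omega)
      subst hw₁
      rcases evenRuns_inv hw2 with ⟨h1, h2, _⟩ | ⟨_, w', hw', _⟩ | ⟨_, w', hw', _⟩
      · exact ⟨⟨a, h1, h2⟩, rfl⟩
      · simp at hw'
      · simp at hw'
  rw [← Nat.card_congr (Equiv.ofBijective _ hbij), Nat.card_congr (rangeEquiv k),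
    Nat.card_eq_fintype_card, Fintype.card_fin]

def wordStep (k n : ℕ) :
    ({i : ℕ // 2 ≤ i ∧ i ≤ 2*k} × {w : List ℕ // w.length = n+1 ∧ EvenRuns01 k w}) ⊕
      (Bool × {w : List ℕ // w.length = n ∧ EvenRuns01 k w}) →
    {w : List ℕ // w.length = n+2 ∧ EvenRuns01 k w}
  | .inl (i, w) => ⟨i.1 :: w.1, by simp [w.2.1], .cons _ _ i.2.1 i.2.2 w.2.2⟩
  | .inr (false, w) => ⟨0 :: 0 :: w.1, by simp [w.2.1], .zz _ w.2.2⟩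
  | .inr (true, w) => ⟨1 :: 1 :: w.1, by simp [w.2.1], .oo _ w.2.2⟩

lemma wordStep_bij (k n : ℕ) : Function.Bijective (wordStep k n) := by
  constructor
  · rintro (⟨i, w⟩ | ⟨b, w⟩) (⟨i', w'⟩ | ⟨b', w'⟩) hab <;>
      have hv := Subtype.ext_iff.mp hab
    · simp only [wordStep] at hv
      injection hv with h1 h2
      rw [Sum.inl.injEq, Prod.ext_iff]
      exact ⟨Subtype.ext h1, Subtype.ext h2⟩
    · exfalso
      cases b' <;> simp only [wordStep] at hv <;>
        · injection hv with h1 _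
          have := i.2.1
          omega
    · exfalso
      cases b <;> simp only [wordStep] at hv <;>
        · injection hv with h1 _
          have := i'.2.1
          omega
    · cases b <;> cases b' <;> simp only [wordStep] at hv <;>
        [skip; skip; skip; skip] <;> first
      | (injection hv with h1 h2
         injection h2 with h2 h3
         rw [Sum.inr.injEq, Prod.ext_iff]
         exact ⟨rfl, Subtype.ext h3⟩)
      | (exfalso; injection hv with h1 _; omega)
  · rintro ⟨w, hw1, hw2⟩
    obtain ⟨a, w₁, rfl⟩ := list_destruct (u := w)
      (by intro hc; rw [hc] at hw1; simp at hw1)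
    have hlw₁ : w₁.length = n + 1 := by
      rw [List.length_cons] at hw1; omega
    rcases evenRuns_inv hw2 with ⟨h1, h2, h3⟩ | ⟨ha, w', hw', hE⟩ | ⟨ha, w', hw', hE⟩
    · exact ⟨.inl (⟨a, h1, h2⟩, ⟨w₁, hlw₁, h3⟩), rfl⟩
    · subst ha
      have hlw' : w'.length = n := by rw [hw'] at hlw₁; simpa using hlw₁
      exact ⟨.inr (false, ⟨w', hlw', hE⟩), Subtype.ext (by simp [wordStep, hw'])⟩
    · subst ha
      have hlw' : w'.length = n := by rw [hw'] at hlw₁; simpa using hlw₁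
      exact ⟨.inr (true, ⟨w', hlw', hE⟩), Subtype.ext (by simp [wordStep, hw'])⟩

lemma wordCount_rec (k n : ℕ) :
    wordCount k (n+2) = (2*k-1) * wordCount k (n+1) + 2 * wordCount k n := by
  haveI : Finite {i : ℕ // 2 ≤ i ∧ i ≤ 2*k} := Finite.of_equiv _ (rangeEquiv k).symm
  rw [wordCount, ← Nat.card_congr (Equiv.ofBijective _ (wordStep_bij k n)),
    Nat.card_sum, Nat.card_prod, Nat.card_prod,
    Nat.card_congr (rangeEquiv k), Nat.card_eq_fintype_card (α := Fin (2*k-1)),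
    Fintype.card_fin]
  rw [Nat.card_eq_fintype_card (α := Bool)]
  simp [wordCount]

instance pell0_subsingleton (k : ℕ) : Subsingleton (PellVtx 0 k) :=
  ⟨fun a b => Subtype.ext (by
    rw [List.length_eq_zero_iff.mp a.2.1, List.length_eq_zero_iff.mp b.2.1])⟩

lemma univ0_cube (k : ℕ) : IsCubeF (Set.univ : Set (PellVtx 0 k)) := by
  refine ⟨0, ⟨RelIso.mk (equivOfSubsingletonOfSubsingleton
    (fun _ => (fun _ => false)) (fun _ => ⟨⟨[], rfl, .nil⟩, trivial⟩)) ?_⟩⟩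
  intro a b
  constructor
  · intro h
    exact absurd (Subsingleton.elim _ _) h.ne
  · intro h
    exact absurd (Subsingleton.elim a b) h.ne

lemma isCube0_iff {k : ℕ} {S : Set (PellVtx 0 k)} : IsCubeF S ↔ S = Set.univ := by
  constructor
  · intro h
    obtain ⟨x, hx⟩ := cube_nonempty h
    apply Set.eq_univ_iff_forall.mpr
    intro y
    rwa [Subsingleton.elim y x]
  · rintro rfl
    exact univ0_cube k

lemma cubeCount_zero (k : ℕ) : cubeCount k 0 = 1 := by
  rw [cubeCount]
  have : Unique {S : Set (PellVtx 0 k) // IsCubeF S} :=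
    { default := ⟨Set.univ, univ0_cube k⟩
      uniq := fun S => Subtype.ext (isCube0_iff.mp S.2) }
  exact Nat.card_unique

lemma pell0_val {k : ℕ} (t : PellVtx 0 k) : t.1 = [] := List.length_eq_zero_iff.mp t.2.1

lemma pell1_shape {k : ℕ} (u : PellVtx 1 k) : ∃ i, i < k ∧ u.1 = [i] := by
  obtain ⟨x, t, hx⟩ := list_destruct (u := u.1)
    (by intro hc; have := u.2.1; rw [hc] at this; simp at this)
  have ht : t = [] := by
    have := u.2.1; rw [hx] at this; simpa using List.length_eq_zero_iff.mp (by simpa using this)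
  subst ht
  rcases genPell_cons_inv (hx ▸ u.2.2) with ⟨hik, _⟩ | ⟨_, b, hb, _⟩
  · exact ⟨x, hik, hx⟩
  · simp at hb

lemma adj1_char {k : ℕ} {u v : PellVtx 1 k} (h : (MunariniGraph 1 k).Adj u v) :
    (∃ j, 0 < j ∧ j < k ∧ u.1 = [0] ∧ v.1 = [j]) ∨
    (∃ j, 0 < j ∧ j < k ∧ v.1 = [0] ∧ u.1 = [j]) := by
  obtain ⟨hne, hmr⟩ := madj_iff.mp h
  obtain ⟨x, hxk, hx⟩ := pell1_shape u
  obtain ⟨y, hyk, hy⟩ := pell1_shape v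
  rw [hx, hy] at hmr
  rcases mrel_cons hmr with ⟨h1, h2⟩ | ⟨h1,h2,h3,h4⟩ | ⟨h1,h2,h3,h4⟩ | ⟨h1,h2,b,h3,h4⟩
    | ⟨h1,h2,b,h3,h4⟩
  · exact absurd rfl (mrel_ne_nil h2)
  · exact Or.inl ⟨y, h2, h3, by rw [hx, h1], hy⟩
  · exact Or.inr ⟨x, h2, h3, by rw [hy, h1], hx⟩
  · simp at h3
  · simp at h3

lemma adj1_mk {k j : ℕ} (h0 : 0 < j) (hjk : j < k) {u v : PellVtx 1 k}
    (hu : u.1 = [0]) (hv : v.1 = [j]) : (MunariniGraph 1 k).Adj u v := by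
  rw [madj_iff]
  constructor
  · intro hc
    rw [hc, hv] at hu
    injection hu with h1
    omega
  · rw [hu, hv]
    exact mrel_cross h0 hjk []

def dec1 (k : ℕ) : ({i : ℕ // i < k} ⊕ {j : ℕ // 0 < j ∧ j < k}) →
    {S : Set (PellVtx 1 k) // IsCubeF S}
  | .inl i => ⟨{u | ∃ t ∈ (Set.univ : Set (PellVtx 0 k)), u.1 = i.1 :: t.1},
      unary_cube_of (iSpec k i.1 i.2) rfl (fun _ => Iff.rfl) (univ0_cube k)⟩
  | .inr j => ⟨{u | ∃ t ∈ (Set.univ : Set (PellVtx 0 k)),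
        u.1 = 0 :: t.1 ∨ u.1 = j.1 :: t.1},
      pair_cube (jSpec k j.1 j.2.1 j.2.2) rfl (fun _ => Iff.rfl) (univ0_cube k)⟩

lemma dec1_inl_mem {k : ℕ} (i : {i : ℕ // i < k}) (u : PellVtx 1 k) :
    u ∈ (dec1 k (.inl i)).1 ↔ u.1 = [i.1] := by
  simp only [dec1, Set.mem_setOf_eq]
  constructor
  · rintro ⟨t, _, ht⟩
    rw [ht, pell0_val t]
  · intro h
    exact ⟨⟨[], rfl, .nil⟩, trivial, h⟩

lemma dec1_inr_mem {k : ℕ} (j : {j : ℕ // 0 < j ∧ j < k}) (u : PellVtx 1 k) :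
    u ∈ (dec1 k (.inr j)).1 ↔ (u.1 = [0] ∨ u.1 = [j.1]) := by
  simp only [dec1, Set.mem_setOf_eq]
  constructor
  · rintro ⟨t, _, ht | ht⟩ <;> rw [ht, pell0_val t]
    · exact Or.inl rfl
    · exact Or.inr rfl
  · rintro (h | h) <;> exact ⟨⟨[], rfl, .nil⟩, trivial, by rw [h]; simp⟩

lemma dec1_bij (k : ℕ) (hk : 1 ≤ k) : Function.Bijective (dec1 k) := by
  constructor
  · rintro (i | j) (i' | j') hab <;> have hv := Subtype.ext_iff.mp hab
    · have h1 : (⟨[i.1], rfl, .cons _ _ i.2 .nil⟩ : PellVtx 1 k) ∈ (dec1 k (.inl i)).1 :=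
        (dec1_inl_mem i _).mpr rfl
      rw [hv] at h1
      have h2 := (dec1_inl_mem i' _).mp h1
      injection h2 with h2
      rw [Sum.inl.injEq]
      exact Subtype.ext h2
    · exfalso
      have h1 : (⟨[i.1], rfl, .cons _ _ i.2 .nil⟩ : PellVtx 1 k) ∈ (dec1 k (.inl i)).1 :=
        (dec1_inl_mem i _).mpr rfl
      have h0 : (⟨[0], rfl, .cons _ _ (by omega) .nil⟩ : PellVtx 1 k) ∈
          (dec1 k (.inr j')).1 := (dec1_inr_mem j' _).mpr (Or.inl rfl)
      have hj : (⟨[j'.1], rfl, .cons _ _ j'.2.2 .nil⟩ : PellVtx 1 k) ∈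
          (dec1 k (.inr j')).1 := (dec1_inr_mem j' _).mpr (Or.inr rfl)
      rw [← hv] at h0 hj
      have h2 := (dec1_inl_mem i _).mp h0
      have h3 := (dec1_inl_mem i _).mp hj
      injection h2 with h2
      injection h3 with h3
      have := j'.2.1
      omega
    · exfalso
      have h0 : (⟨[0], rfl, .cons _ _ (by omega) .nil⟩ : PellVtx 1 k) ∈
          (dec1 k (.inr j)).1 := (dec1_inr_mem j _).mpr (Or.inl rfl)
      have hj : (⟨[j.1], rfl, .cons _ _ j.2.2 .nil⟩ : PellVtx 1 k) ∈
          (dec1 k (.inr j)).1 := (dec1_inr_mem j _).mpr (Or.inr rfl)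
      rw [hv] at h0 hj
      have h2 := (dec1_inl_mem i' _).mp h0
      have h3 := (dec1_inl_mem i' _).mp hj
      injection h2 with h2
      injection h3 with h3
      have := j.2.1
      omega
    · have hj : (⟨[j.1], rfl, .cons _ _ j.2.2 .nil⟩ : PellVtx 1 k) ∈
          (dec1 k (.inr j)).1 := (dec1_inr_mem j _).mpr (Or.inr rfl)
      rw [hv] at hj
      have h2 := (dec1_inr_mem j' _).mp hj
      rcases h2 with h2 | h2 <;> injection h2 with h2
      · exact absurd h2 (by have := j.2.1; omega)
      · rw [Sum.inr.injEq]
        exact Subtype.ext h2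
  · rintro ⟨S, hS⟩
    obtain ⟨p, ⟨φ⟩⟩ := hS
    cases p with
    | zero =>
      set x := φ.symm (fun _ => false) with hx
      obtain ⟨i, hik, hxi⟩ := pell1_shape x.1
      refine ⟨.inl ⟨i, hik⟩, Subtype.ext (Set.ext fun u => ?_)⟩
      rw [dec1_inl_mem]
      constructor
      · intro hu
        have h5 : u = x.1 := Subtype.ext (hu.trans hxi.symm)
        rw [h5]; exact x.2
      · intro hu
        have h6 : (⟨u, hu⟩ : ↥S) = x := φ.injective (Subsingleton.elim _ _)
        have h7 : u.1 = x.1.1 := congrArg (fun z : ↥S => z.1.1) h6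
        exact h7.trans hxi
    | succ q =>
      set z0 : Fin (q+1) → Bool := fun _ => false with hz0
      set z1 := Function.update z0 0 (!z0 0) with hz1
      set x0 := φ.symm z0 with hx0
      set x1 := φ.symm z1 with hx1
      have hadj01 : ((MunariniGraph 1 k).induce S).Adj x0 x1 := by
        rw [← φ.map_rel_iff, φ.apply_symm_apply, φ.apply_symm_apply]
        exact QF_adj.mpr ⟨0, rfl⟩
      have hq : q = 0 := by
        by_contra hq0
        obtain ⟨q', rfl⟩ : ∃ q', q = q' + 1 := ⟨q - 1, by omega⟩
        have h01 : (0 : Fin (q'+2)) ≠ 1 := by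
          intro hc
          have := congrArg Fin.val hc
          simp at this
        set z00 : Fin (q'+2) → Bool := fun _ => false with hz00
        set z10 := Function.update z00 0 (!z00 0) with hz10
        set z01 := Function.update z00 1 (!z00 1) with hz01
        set z11 := Function.update z10 1 (!z10 1) with hz11
        have hz11' : z11 = Function.update z01 0 (!z01 0) := by
          rw [hz11, hz10, hz01]
          exact update_flip_comm z00 h01
        have hne1 : z10 ≠ z01 := by
          intro hc
          have := congrFun hc 0
          rw [hz10, hz01] at this
          rw [Function.update_self, Function.update_of_ne h01] at this
          simp [hz00] at this
        have hne2 : z00 ≠ z11 := by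
          intro hc
          have := congrFun hc 0
          rw [hz11, hz10] at this
          rw [Function.update_of_ne h01, Function.update_self] at this
          simp [hz00] at this
        set a00 := φ.symm z00
        set a10 := φ.symm z10
        set a01 := φ.symm z01
        set a11 := φ.symm z11
        have hA : ∀ (y y' : Fin (q'+2) → Bool), (QF (q'+2)).Adj y y' →
            (φ.symm y).1.1 = [0] ∨ (φ.symm y').1.1 = [0] := by
          intro y y' hyy
          have h6 : ((MunariniGraph 1 k).induce S).Adj (φ.symm y) (φ.symm y') := by
            refine φ.map_rel_iff.mp ?_
            rw [φ.apply_symm_apply, φ.apply_symm_apply]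
            exact hyy
          rcases adj1_char (ind_adj.mp h6) with ⟨j, _, _, h7, _⟩ | ⟨j, _, _, h7, _⟩
          · exact Or.inl h7
          · exact Or.inr h7
        have e1 := hA z00 z10 (QF_adj.mpr ⟨0, rfl⟩)
        have e2 := hA z00 z01 (QF_adj.mpr ⟨1, rfl⟩)
        have e3 := hA z10 z11 (QF_adj.mpr ⟨1, rfl⟩)
        have e4 := hA z01 z11 (QF_adj.mpr ⟨0, by rw [hz11']⟩)
        have ha00 : a00.1.1 = [0] := by
          by_contra hc
          have h10 : a10.1.1 = [0] := (e1.resolve_left hc)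
          have h01' : a01.1.1 = [0] := (e2.resolve_left hc)
          have h9 : a10 = a01 := Subtype.ext (Subtype.ext (h10.trans h01'.symm))
          refine hne1 ?_
          have h8 := congrArg φ h9
          rwa [φ.apply_symm_apply, φ.apply_symm_apply] at h8
        have ha11 : a11.1.1 = [0] := by
          by_contra hc
          have h10 : a10.1.1 = [0] := (e3.resolve_right hc)
          have h01' : a01.1.1 = [0] := (e4.resolve_right hc)
          have h9 : a10 = a01 := Subtype.ext (Subtype.ext (h10.trans h01'.symm))
          refine hne1 ?_
          have h8 := congrArg φ h9
          rwa [φ.apply_symm_apply, φ.apply_symm_apply] at h8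
        have h9 : a00 = a11 := Subtype.ext (Subtype.ext (ha00.trans ha11.symm))
        refine hne2 ?_
        have h8 := congrArg φ h9
        rwa [φ.apply_symm_apply, φ.apply_symm_apply] at h8
      subst hq
      have hall : ∀ u : ↥S, u = x0 ∨ u = x1 := by
        intro u
        have h9 : φ u = z0 ∨ φ u = z1 := by
          by_cases hv : φ u 0 = false
          · left
            funext i
            have hi0 : i = 0 := Fin.ext (by omega)
            rw [hi0, hv]
          · right
            funext i
            have hi0 : i = 0 := Fin.ext (by omega)
            rw [hi0, hz1, Function.update_self]
            simp only [hz0]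
            cases hw : φ u 0
            · exact absurd hw hv
            · rfl
        rcases h9 with h | h
        · exact Or.inl (by rw [hx0, ← h, φ.symm_apply_apply])
        · exact Or.inr (by rw [hx1, ← h, φ.symm_apply_apply])
      rcases adj1_char (ind_adj.mp hadj01) with ⟨j, hj0, hjk, h7, h8⟩ | ⟨j, hj0, hjk, h7, h8⟩
      · refine ⟨.inr ⟨j, hj0, hjk⟩, Subtype.ext (Set.ext fun u => ?_)⟩
        rw [dec1_inr_mem]
        constructor
        · rintro (hu | hu)
          · have h5 : u = x0.1 := Subtype.ext (hu.trans h7.symm)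
            rw [h5]; exact x0.2
          · have h5 : u = x1.1 := Subtype.ext (hu.trans h8.symm)
            rw [h5]; exact x1.2
        · intro hu
          rcases hall ⟨u, hu⟩ with h | h
          · have h6 : u.1 = x0.1.1 := congrArg (fun z : ↥S => z.1.1) h
            exact Or.inl (h6.trans h7)
          · have h6 : u.1 = x1.1.1 := congrArg (fun z : ↥S => z.1.1) h
            exact Or.inr (h6.trans h8)
      · refine ⟨.inr ⟨j, hj0, hjk⟩, Subtype.ext (Set.ext fun u => ?_)⟩
        rw [dec1_inr_mem]
        constructor
        · rintro (hu | hu)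
          · have h5 : u = x1.1 := Subtype.ext (hu.trans h7.symm)
            rw [h5]; exact x1.2
          · have h5 : u = x0.1 := Subtype.ext (hu.trans h8.symm)
            rw [h5]; exact x0.2
        · intro hu
          rcases hall ⟨u, hu⟩ with h | h
          · have h6 : u.1 = x0.1.1 := congrArg (fun z : ↥S => z.1.1) h
            exact Or.inr (h6.trans h8)
          · have h6 : u.1 = x1.1.1 := congrArg (fun z : ↥S => z.1.1) h
            exact Or.inl (h6.trans h7)

def ltEquiv (k : ℕ) : {i : ℕ // i < k} ≃ Fin k where
  toFun i := ⟨i.1, i.2⟩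
  invFun i := ⟨i.1, i.2⟩
  left_inv i := rfl
  right_inv i := rfl

def posLtEquiv (k : ℕ) : {j : ℕ // 0 < j ∧ j < k} ≃ Fin (k-1) where
  toFun j := ⟨j.1 - 1, by omega⟩
  invFun j := ⟨j.1 + 1, by omega⟩
  left_inv j := Subtype.ext (by have := j.2; simp only []; omega)
  right_inv j := Fin.ext (by simp only []; omega)

lemma cubeCount_one (k : ℕ) (hk : 1 ≤ k) : cubeCount k 1 = 2 * k - 1 := by
  haveI : Finite {i : ℕ // i < k} := Finite.of_equiv _ (ltEquiv k).symm
  haveI : Finite {j : ℕ // 0 < j ∧ j < k} := Finite.of_equiv _ (posLtEquiv k).symm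
  rw [cubeCount, ← Nat.card_congr (Equiv.ofBijective _ (dec1_bij k hk)), Nat.card_sum,
    Nat.card_congr (ltEquiv k), Nat.card_congr (posLtEquiv k),
    Nat.card_eq_fintype_card (α := Fin k), Nat.card_eq_fintype_card (α := Fin (k-1)),
    Fintype.card_fin, Fintype.card_fin]
  omega

def mkA {m k : ℕ} (i : ℕ) (hik : i < k) (t : PellVtx m k) : PellVtx (m+1) k :=
  ⟨i :: t.1, by simp [t.2.1], .cons _ _ hik t.2.2⟩

def mkKK {m k : ℕ} (t : PellVtx m k) : PellVtx (m+2) k :=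
  ⟨k :: k :: t.1, by simp [t.2.1], .kk _ t.2.2⟩

def dec2 (k n : ℕ) (hk : 1 ≤ k) :
    (({i : ℕ // i < k} ⊕ {j : ℕ // 0 < j ∧ j < k}) ×
      {T : Set (PellVtx (n+1) k) // IsCubeF T}) ⊕
    (Bool × {T : Set (PellVtx n k) // IsCubeF T}) →
    {S : Set (PellVtx (n+2) k) // IsCubeF S}
  | .inl (.inl i, T) => ⟨{u | ∃ t ∈ T.1, u.1 = i.1 :: t.1},
      unary_cube_of (iSpec k i.1 i.2) rfl (fun _ => Iff.rfl) T.2⟩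
  | .inl (.inr j, T) => ⟨{u | ∃ t ∈ T.1, u.1 = 0 :: t.1 ∨ u.1 = j.1 :: t.1},
      pair_cube (jSpec k j.1 j.2.1 j.2.2) rfl (fun _ => Iff.rfl) T.2⟩
  | .inr (false, T) => ⟨{u | ∃ t ∈ T.1, u.1 = k :: k :: t.1},
      unary_cube_of (kk2Spec k hk) rfl (fun _ => Iff.rfl) T.2⟩
  | .inr (true, T) => ⟨{u | ∃ t ∈ T.1, u.1 = 0 :: 0 :: t.1 ∨ u.1 = k :: k :: t.1},
      pair_cube (kkSpec k hk) rfl (fun _ => Iff.rfl) T.2⟩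

lemma dec2_surj (k n : ℕ) (hk : 1 ≤ k) : Function.Surjective (dec2 k n hk) := by
  rintro ⟨S, hS⟩
  rcases classify_step hk hS with ⟨i, hik, T, hT, hdesc⟩ | ⟨j, hj0, hjk, T, hT, hdesc⟩
    | ⟨T, hT, hdesc⟩ | ⟨T, hT, hdesc⟩
  · exact ⟨.inl (.inl ⟨i, hik⟩, ⟨T, hT⟩), Subtype.ext (Set.ext fun u => (hdesc u).symm)⟩
  · exact ⟨.inl (.inr ⟨j, hj0, hjk⟩, ⟨T, hT⟩),
      Subtype.ext (Set.ext fun u => (hdesc u).symm)⟩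
  · exact ⟨.inr (false, ⟨T, hT⟩), Subtype.ext (Set.ext fun u => (hdesc u).symm)⟩
  · exact ⟨.inr (true, ⟨T, hT⟩), Subtype.ext (Set.ext fun u => (hdesc u).symm)⟩

lemma dec2_inj (k n : ℕ) (hk : 1 ≤ k) : Function.Injective (dec2 k n hk) := by
  have h0k : 0 < k := hk
  rintro (⟨i | j, T⟩ | ⟨b, T⟩) (⟨i' | j', T'⟩ | ⟨b', T'⟩) hab <;>
    have hv := Subtype.ext_iff.mp hab
  · -- A A
    obtain ⟨t0, ht0⟩ := cube_nonempty T.2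
    have h1 : mkA i.1 i.2 t0 ∈ (dec2 k n hk (.inl (.inl i', T'))).1 := by
      rw [← hv]; exact ⟨t0, ht0, rfl⟩
    obtain ⟨t', _, heq⟩ := h1
    injection heq with hii _
    obtain rfl : i = i' := Subtype.ext hii
    obtain rfl : T = T' := by
      refine Subtype.ext (Set.ext fun t => ?_)
      constructor
      · intro ht
        have h2 : mkA i.1 i.2 t ∈ (dec2 k n hk (.inl (.inl i, T'))).1 := by
          rw [← hv]; exact ⟨t, ht, rfl⟩
        obtain ⟨t', ht', heq⟩ := h2
        injection heq with _ h3
        rwa [show t = t' from Subtype.ext h3]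
      · intro ht
        have h2 : mkA i.1 i.2 t ∈ (dec2 k n hk (.inl (.inl i, T))).1 := by
          rw [hv]; exact ⟨t, ht, rfl⟩
        obtain ⟨t', ht', heq⟩ := h2
        injection heq with _ h3
        rwa [show t = t' from Subtype.ext h3]
    rfl
  · -- A B'
    exfalso
    obtain ⟨t0, ht0⟩ := cube_nonempty T'.2
    have h1 : mkA 0 h0k t0 ∈ (dec2 k n hk (.inl (.inl i, T))).1 := by
      rw [hv]; exact ⟨t0, ht0, Or.inl rfl⟩
    have h2 : mkA j'.1 j'.2.2 t0 ∈ (dec2 k n hk (.inl (.inl i, T))).1 := by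
      rw [hv]; exact ⟨t0, ht0, Or.inr rfl⟩
    obtain ⟨ta, _, heqa⟩ := h1
    obtain ⟨tb, _, heqb⟩ := h2
    injection heqa with ha _
    injection heqb with hb _
    have := j'.2.1
    omega
  · -- A C/D
    exfalso
    obtain ⟨t0, ht0⟩ := cube_nonempty T'.2
    cases b' <;> have hv' := hv
    · have h1 : mkKK t0 ∈ (dec2 k n hk (.inl (.inl i, T))).1 := by
        rw [hv']; exact ⟨t0, ht0, rfl⟩
      obtain ⟨ta, _, heqa⟩ := h1
      injection heqa with ha _
      have := i.2
      omega
    · have h1 : mkKK t0 ∈ (dec2 k n hk (.inl (.inl i, T))).1 := by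
        rw [hv']; exact ⟨t0, ht0, Or.inr rfl⟩
      obtain ⟨ta, _, heqa⟩ := h1
      injection heqa with ha _
      have := i.2
      omega
  · -- B A'
    exfalso
    obtain ⟨t0, ht0⟩ := cube_nonempty T.2
    have h1 : mkA 0 h0k t0 ∈ (dec2 k n hk (.inl (.inl i', T'))).1 := by
      rw [← hv]; exact ⟨t0, ht0, Or.inl rfl⟩
    have h2 : mkA j.1 j.2.2 t0 ∈ (dec2 k n hk (.inl (.inl i', T'))).1 := by
      rw [← hv]; exact ⟨t0, ht0, Or.inr rfl⟩
    obtain ⟨ta, _, heqa⟩ := h1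
    obtain ⟨tb, _, heqb⟩ := h2
    injection heqa with ha _
    injection heqb with hb _
    have := j.2.1
    omega
  · -- B B'
    obtain ⟨t0, ht0⟩ := cube_nonempty T.2
    have h1 : mkA j.1 j.2.2 t0 ∈ (dec2 k n hk (.inl (.inr j', T'))).1 := by
      rw [← hv]; exact ⟨t0, ht0, Or.inr rfl⟩
    obtain ⟨t', _, heq | heq⟩ := h1 <;> injection heq with hjj _
    · exact absurd hjj (by have := j.2.1; omega)
    obtain rfl : j = j' := Subtype.ext hjj
    obtain rfl : T = T' := by
      refine Subtype.ext (Set.ext fun t => ?_)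
      constructor
      · intro ht
        have h2 : mkA 0 h0k t ∈ (dec2 k n hk (.inl (.inr j, T'))).1 := by
          rw [← hv]; exact ⟨t, ht, Or.inl rfl⟩
        obtain ⟨t', ht', heq | heq⟩ := h2 <;> injection heq with h4 h3
        · rwa [show t = t' from Subtype.ext h3]
        · exact absurd h4.symm (by have := j.2.1; omega)
      · intro ht
        have h2 : mkA 0 h0k t ∈ (dec2 k n hk (.inl (.inr j, T))).1 := by
          rw [hv]; exact ⟨t, ht, Or.inl rfl⟩
        obtain ⟨t', ht', heq | heq⟩ := h2 <;> injection heq with h4 h3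
        · rwa [show t = t' from Subtype.ext h3]
        · exact absurd h4.symm (by have := j.2.1; omega)
    rfl
  · -- B C/D
    exfalso
    obtain ⟨t0, ht0⟩ := cube_nonempty T.2
    cases b' <;> have hv' := hv
    · have h1 : mkA j.1 j.2.2 t0 ∈ (dec2 k n hk (.inr (false, T'))).1 := by
        rw [← hv']; exact ⟨t0, ht0, Or.inr rfl⟩
      obtain ⟨ta, _, heqa⟩ := h1
      injection heqa with ha _
      have := j.2.2
      omega
    · have h1 : mkA j.1 j.2.2 t0 ∈ (dec2 k n hk (.inr (true, T'))).1 := by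
        rw [← hv']; exact ⟨t0, ht0, Or.inr rfl⟩
      obtain ⟨ta, _, heqa | heqa⟩ := h1 <;> injection heqa with ha _
      · exact absurd ha (by have := j.2.1; omega)
      · exact absurd ha (by have := j.2.2; omega)
  · -- C/D A'
    exfalso
    obtain ⟨t0, ht0⟩ := cube_nonempty T.2
    cases b <;> have hv' := hv
    · have h1 : mkKK t0 ∈ (dec2 k n hk (.inl (.inl i', T'))).1 := by
        rw [← hv']; exact ⟨t0, ht0, rfl⟩
      obtain ⟨ta, _, heqa⟩ := h1
      injection heqa with ha _
      have := i'.2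
      omega
    · have h1 : mkKK t0 ∈ (dec2 k n hk (.inl (.inl i', T'))).1 := by
        rw [← hv']; exact ⟨t0, ht0, Or.inr rfl⟩
      obtain ⟨ta, _, heqa⟩ := h1
      injection heqa with ha _
      have := i'.2
      omega
  · -- C/D B'
    exfalso
    obtain ⟨t0, ht0⟩ := cube_nonempty T.2
    cases b <;> have hv' := hv
    · have h1 : mkKK t0 ∈ (dec2 k n hk (.inl (.inr j', T'))).1 := by
        rw [← hv']; exact ⟨t0, ht0, rfl⟩
      obtain ⟨ta, _, heqa | heqa⟩ := h1 <;> injection heqa with ha _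
      · omega
      · exact absurd ha (by have := j'.2.2; omega)
    · have h1 : mkKK t0 ∈ (dec2 k n hk (.inl (.inr j', T'))).1 := by
        rw [← hv']; exact ⟨t0, ht0, Or.inr rfl⟩
      obtain ⟨ta, _, heqa | heqa⟩ := h1 <;> injection heqa with ha _
      · omega
      · exact absurd ha (by have := j'.2.2; omega)
  · -- C/D C'/D'
    obtain ⟨t0, ht0⟩ := cube_nonempty T.2
    cases b <;> cases b' <;> have hv' := hv
    · -- C C
      obtain rfl : T = T' := by
        refine Subtype.ext (Set.ext fun t => ?_)
        constructor
        · intro ht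
          have h2 : mkKK t ∈ (dec2 k n hk (.inr (false, T'))).1 := by
            rw [← hv']; exact ⟨t, ht, rfl⟩
          obtain ⟨t', ht', heq⟩ := h2
          injection heq with _ heq
          injection heq with _ h3
          rwa [show t = t' from Subtype.ext h3]
        · intro ht
          have h2 : mkKK t ∈ (dec2 k n hk (.inr (false, T))).1 := by
            rw [hv']; exact ⟨t, ht, rfl⟩
          obtain ⟨t', ht', heq⟩ := h2
          injection heq with _ heq
          injection heq with _ h3
          rwa [show t = t' from Subtype.ext h3]
      rfl
    · -- C D
      exfalso
      obtain ⟨s0, hs0⟩ := cube_nonempty T'.2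
      have h1 : mkA 0 h0k (mkA 0 h0k s0) ∈ (dec2 k n hk (.inr (false, T))).1 := by
        rw [hv']; exact ⟨s0, hs0, Or.inl rfl⟩
      obtain ⟨ta, _, heqa⟩ := h1
      injection heqa with ha _
      omega
    · -- D C
      exfalso
      have h1 : mkA 0 h0k (mkA 0 h0k t0) ∈ (dec2 k n hk (.inr (false, T'))).1 := by
        rw [← hv']; exact ⟨t0, ht0, Or.inl rfl⟩
      obtain ⟨ta, _, heqa⟩ := h1
      injection heqa with ha _
      omega
    · -- D D
      obtain rfl : T = T' := by
        refine Subtype.ext (Set.ext fun t => ?_)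
        constructor
        · intro ht
          have h2 : mkA 0 h0k (mkA 0 h0k t) ∈ (dec2 k n hk (.inr (true, T'))).1 := by
            rw [← hv']; exact ⟨t, ht, Or.inl rfl⟩
          obtain ⟨t', ht', heq | heq⟩ := h2
          · injection heq with _ heq
            injection heq with _ h3
            rwa [show t = t' from Subtype.ext h3]
          · injection heq with h4 _
            omega
        · intro ht
          have h2 : mkA 0 h0k (mkA 0 h0k t) ∈ (dec2 k n hk (.inr (true, T))).1 := by
            rw [hv']; exact ⟨t, ht, Or.inl rfl⟩
          obtain ⟨t', ht', heq | heq⟩ := h2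
          · injection heq with _ heq
            injection heq with _ h3
            rwa [show t = t' from Subtype.ext h3]
          · injection heq with h4 _
            omega
      rfl

lemma cubeCount_rec (k n : ℕ) (hk : 1 ≤ k) :
    cubeCount k (n+2) = (2*k-1) * cubeCount k (n+1) + 2 * cubeCount k n := by
  haveI : Finite {i : ℕ // i < k} := Finite.of_equiv _ (ltEquiv k).symm
  haveI : Finite {j : ℕ // 0 < j ∧ j < k} := Finite.of_equiv _ (posLtEquiv k).symm
  rw [cubeCount, ← Nat.card_congr
    (Equiv.ofBijective _ ⟨dec2_inj k n hk, dec2_surj k n hk⟩), Nat.card_sum,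
    Nat.card_prod, Nat.card_prod, Nat.card_sum,
    Nat.card_congr (ltEquiv k), Nat.card_congr (posLtEquiv k),
    Nat.card_eq_fintype_card (α := Fin k), Nat.card_eq_fintype_card (α := Fin (k-1)),
    Nat.card_eq_fintype_card (α := Bool), Fintype.card_fin, Fintype.card_fin]
  show (k + (k-1)) * cubeCount k (n+1) + 2 * cubeCount k n = _
  congr 1
  congr 1
  omega

lemma counts_eq (k : ℕ) (hk : 1 ≤ k) : ∀ n, cubeCount k n = wordCount k n := by
  intro n
  induction n using Nat.strong_induction_on with
  | _ n ih =>
    match n with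
    | 0 => rw [cubeCount_zero, wordCount_zero]
    | 1 => rw [cubeCount_one k hk, wordCount_one]
    | (m+2) =>
      rw [cubeCount_rec k m hk, wordCount_rec, ih (m+1) (by omega), ih m (by omega)]


/-- the total number of vertex subsets of `M_{n,k}` inducing a hypercube
equals the number of words of length `n` over `{0,…,2k}` in which every maximal run of
`0`s and every maximal run of `1`s has even length. -/
theorem munarini_cube_number (k n : ℕ) (hk : 1 ≤ k) :
    {S : Set (PellVtx n k) |
        ∃ p : ℕ, Nonempty ((MunariniGraph n k).induce S ≃g QCube p)}.ncard =
      {w : List ℕ | w.length = n ∧ EvenRuns01 k w}.ncard := by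
  have h1 : {S : Set (PellVtx n k) |
      ∃ p : ℕ, Nonempty ((MunariniGraph n k).induce S ≃g QCube p)} = {S | IsCubeF S} :=
    Set.ext fun S => mcube_iff
  rw [h1, ← Nat.card_coe_set_eq, ← Nat.card_coe_set_eq]
  exact counts_eq k hk n
end
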